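/- arXiv:1407.3953 — 7 statements merged into one kernel-verified Lean document; each statement's English description precedes it below -/
import Mathlib

section
/- The geometric automorphism group Geom of T_n*(S) has cardinality q^{t(n+1)} · (q^t − 1) · t · h · |GL_{n+1}(F_q)| / (q−1); equivalently, (Nat.card Geom) · (q−1) = q^{t(n+1)} · (q^t − 1) · t · h · |GL_{n+1}(F_q)|, where q = p^h and |GL_{n+1}(F_q)| denotes the order of the group of invertible (n+1)×(n+1) matrices over the field with q elements. -/
/-- A line of the linear representation `T_n*(S)`: the point set `{x₀ + λ•v̂ : λ ∈ L}` for
some `x₀ ∈ L^{n+1}` and some nonzero `v ∈ K^{n+1}`, where `v̂` is `v` mapped into `L`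
coordinatewise. -/
def IsTLine (n : ℕ) (K L : Type) [Field K] [Field L] [Algebra K L]
    (s : Set (Fin (n + 1) → L)) : Prop :=
  ∃ x₀ : Fin (n + 1) → L, ∃ v : Fin (n + 1) → K, v ≠ 0 ∧
    s = {y | ∃ lam : L, y = x₀ + lam • fun i => algebraMap K L (v i)}

/-- `α` is a geometric automorphism of `T_n*(S)`: an automorphism of the form
`x ↦ g(x) + c` with `g` an additive, semilinear (w.r.t. some field automorphism `σ` of `L`)
bijection of `L^{n+1}`. -/
def IsGeomAut (n : ℕ) (K L : Type) [Field K] [Field L] [Algebra K L]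
    (α : Equiv.Perm (Fin (n + 1) → L)) : Prop :=
  (∀ s : Set (Fin (n + 1) → L), IsTLine n K L s → IsTLine n K L (⇑α '' s)) ∧
  ∃ σ : L ≃+* L, ∃ g : (Fin (n + 1) → L) → (Fin (n + 1) → L), ∃ c : Fin (n + 1) → L,
    Function.Bijective g ∧
    (∀ x y, g (x + y) = g x + g y) ∧
    (∀ (lam : L) (x), g (lam • x) = σ lam • g x) ∧
    (∀ x, α x = g x + c)

namespace S3

variable {n : ℕ} {K L : Type} [Field K] [Field L] [Algebra K L]

/-- coordinatewise inclusion -/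
def hat (v : Fin (n + 1) → K) : Fin (n + 1) → L := fun i => algebraMap K L (v i)

lemma hat_inj : Function.Injective (hat (n := n) (K := K) (L := L)) := by
  intro a b hab
  funext i
  exact (algebraMap K L).injective (congrFun hab i)

lemma hat_ne_zero {v : Fin (n + 1) → K} (hv : v ≠ 0) : hat (L := L) v ≠ 0 := by
  intro h0
  have : hat (L := L) v = hat (0 : Fin (n + 1) → K) := by
    funext i; simpa [hat] using congrFun h0 i
  exact hv (hat_inj this)

lemma hat_add (a b : Fin (n + 1) → K) : hat (L := L) (a + b) = hat a + hat b := by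
  funext i
  simp [hat, map_add]

lemma translate_line {s : Set (Fin (n + 1) → L)} (d : Fin (n + 1) → L)
    (hs : IsTLine n K L s) : IsTLine n K L ((fun y => y + d) '' s) := by
  obtain ⟨x₀, v, hv, rfl⟩ := hs
  refine ⟨x₀ + d, v, hv, ?_⟩
  ext y
  constructor
  · rintro ⟨z, ⟨lam, rfl⟩, rfl⟩
    exact ⟨lam, by dsimp; abel⟩
  · rintro ⟨lam, rfl⟩
    exact ⟨x₀ + lam • fun i => algebraMap K L (v i), ⟨lam, rfl⟩, by dsimp; abel⟩

/-- The predicate on the "linear part". -/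
def P (n : ℕ) (K L : Type) [Field K] [Field L] [Algebra K L]
    (g : (Fin (n + 1) → L) → (Fin (n + 1) → L)) : Prop :=
  (∀ s : Set (Fin (n + 1) → L), IsTLine n K L s → IsTLine n K L (g '' s)) ∧
  Function.Bijective g ∧ (∀ x y, g (x + y) = g x + g y) ∧
  ∃ σ : L ≃+* L, ∀ (lam : L) (x), g (lam • x) = σ lam • g x

section Field

variable [Fintype K] [Fintype L] {q : ℕ}

open Polynomial in
lemma mem_range_iff_pow (hq2 : 2 ≤ q) (hK : Fintype.card K = q) (x : L) :
    x ∈ Set.range (algebraMap K L) ↔ x ^ q = x := by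
  classical
  constructor
  · rintro ⟨k, rfl⟩
    rw [← map_pow, ← hK, FiniteField.pow_card]
  · intro hx
    set f : L[X] := X ^ q - X with hf
    have hdegX : (X : L[X]).natDegree < (X ^ q : L[X]).natDegree := by
      simp [natDegree_X_pow]; omega
    have hdeg : f.natDegree = q := by
      rw [hf, natDegree_sub_eq_left_of_natDegree_lt hdegX, natDegree_X_pow]
    have hf0 : f ≠ 0 := fun h => by simp [h] at hdeg; omega
    have hroot : ∀ y : L, y ^ q = y → y ∈ f.roots.toFinset := by
      intro y hy
      simp only [Multiset.mem_toFinset, mem_roots hf0, IsRoot, hf]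
      simp [hy]
      exact hf0
    have hsub : (Finset.univ.image (algebraMap K L)) ⊆ f.roots.toFinset := by
      intro y hy
      obtain ⟨k, _, rfl⟩ := Finset.mem_image.mp hy
      exact hroot _ (by rw [← map_pow, ← hK, FiniteField.pow_card])
    have hcard : f.roots.toFinset.card ≤ (Finset.univ.image (algebraMap K L)).card := by
      rw [Finset.card_image_of_injective _ (algebraMap K L).injective]
      calc f.roots.toFinset.card ≤ Multiset.card f.roots := f.roots.toFinset_card_le
        _ ≤ f.natDegree := f.card_roots'
        _ = q := hdeg
        _ = Fintype.card K := hK.symm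
        _ = Finset.univ.card := (Finset.card_univ).symm
    have heq := Finset.eq_of_subset_of_card_le hsub hcard
    have : x ∈ f.roots.toFinset := hroot x hx
    rw [← heq] at this
    obtain ⟨k, _, rfl⟩ := Finset.mem_image.mp this
    exact ⟨k, rfl⟩

lemma sigma_stable (hq2 : 2 ≤ q) (hK : Fintype.card K = q) (σ : L ≃+* L) (k : K) :
    ∃ k' : K, algebraMap K L k' = σ (algebraMap K L k) := by
  have : σ (algebraMap K L k) ∈ Set.range (algebraMap K L) := by
    rw [mem_range_iff_pow hq2 hK, ← map_pow]
    congr 1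
    exact (mem_range_iff_pow hq2 hK _).mp ⟨k, rfl⟩
  obtain ⟨k', hk'⟩ := this
  exact ⟨k', hk'⟩

end Field

section Phi

variable [Fintype K] [Fintype L] {q : ℕ}

/-- the standard semilinear maps -/
def phiFun (σ : L ≃+* L) (lam : L) (A : Matrix (Fin (n + 1)) (Fin (n + 1)) K) :
    (Fin (n + 1) → L) → (Fin (n + 1) → L) :=
  fun x => lam • (A.map (algebraMap K L)).mulVec (fun i => σ (x i))

lemma mulVec_hat (A : Matrix (Fin (n + 1)) (Fin (n + 1)) K) (v : Fin (n + 1) → K) :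
    (A.map (algebraMap K L)).mulVec (hat v) = hat (A.mulVec v) := by
  funext j
  simp [Matrix.mulVec, dotProduct, hat, Matrix.map_apply, map_sum, map_mul]

lemma phi_mem_P (hq2 : 2 ≤ q) (hK : Fintype.card K = q)
    (σ : L ≃+* L) (lam : L) (A : Matrix (Fin (n + 1)) (Fin (n + 1)) K)
    (hlam : lam ≠ 0) (hA : A.det ≠ 0) : P n K L (phiFun σ lam A) := by
  classical
  have hdet : IsUnit A.det := Ne.isUnit hA
  set B := A⁻¹ with hB
  have hBA : B * A = 1 := Matrix.nonsing_inv_mul A hdet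
  have hAB : A * B = 1 := Matrix.mul_nonsing_inv A hdet
  set AL := A.map (algebraMap K L) with hALdef
  set BL := B.map (algebraMap K L) with hBLdef
  have hBAL : BL * AL = 1 := by
    rw [hBLdef, hALdef, ← Matrix.map_mul, hBA, Matrix.map_one _ (map_zero _) (map_one _)]
  have hABL : AL * BL = 1 := by
    rw [hBLdef, hALdef, ← Matrix.map_mul, hAB, Matrix.map_one _ (map_zero _) (map_one _)]
  -- additivity
  have hadd : ∀ x y, phiFun σ lam A (x + y) = phiFun σ lam A x + phiFun σ lam A y := by
    intro x y
    simp only [phiFun]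
    have : (fun i => σ ((x + y) i)) = (fun i => σ (x i)) + fun i => σ (y i) := by
      funext i
      simp [map_add]
    rw [this, Matrix.mulVec_add, smul_add]
  -- semilinearity
  have hsem : ∀ (c : L) (x), phiFun σ lam A (c • x) = σ c • phiFun σ lam A x := by
    intro c x
    simp only [phiFun]
    have : (fun i => σ ((c • x) i)) = σ c • fun i => σ (x i) := by
      funext i
      simp [map_mul]
    rw [this, Matrix.mulVec_smul, smul_comm]
  -- bijectivity
  have hbij : Function.Bijective (phiFun σ lam A) := by
    apply Function.bijective_iff_has_inverse.mpr
    refine ⟨fun y => fun i => σ.symm ((BL.mulVec (lam⁻¹ • y)) i), ?_, ?_⟩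
    · intro x
      funext i
      simp only [phiFun]
      rw [smul_smul, inv_mul_cancel₀ hlam, one_smul, Matrix.mulVec_mulVec, hBAL,
        Matrix.one_mulVec]
      simp
    · intro y
      funext i
      simp only [phiFun]
      have : (fun i => σ (σ.symm ((BL.mulVec (lam⁻¹ • y)) i))) = BL.mulVec (lam⁻¹ • y) := by
        funext j
        simp
      rw [this, Matrix.mulVec_mulVec, hABL, Matrix.one_mulVec, smul_smul,
        mul_inv_cancel₀ hlam, one_smul]
  refine ⟨?_, hbij, hadd, σ, hsem⟩
  -- lines
  intro s hs
  obtain ⟨x₀, v, hv, rfl⟩ := hs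
  have hconv : (fun i => algebraMap K L (v i)) = hat (L := L) v := rfl
  choose w hw using fun i => sigma_stable hq2 hK σ (v i)
  have hw0 : w ≠ 0 := by
    intro h0
    apply hv
    funext i
    have hi := hw i
    rw [h0] at hi
    simp only [Pi.zero_apply, map_zero] at hi
    have h2 : algebraMap K L (v i) = 0 := by
      apply σ.injective
      rw [← hi, map_zero]
    have : v i = 0 := by
      apply (algebraMap K L).injective
      rw [h2, map_zero]
    simpa using this
  set u := A.mulVec w with hu
  have hu0 : u ≠ 0 := by
    intro h0
    apply hA
    rw [← Matrix.exists_mulVec_eq_zero_iff]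
    exact ⟨w, hw0, h0⟩
  have hconvu : (fun i => algebraMap K L (u i)) = hat (L := L) u := rfl
  have hkey : ∀ c : L, phiFun σ lam A (c • hat (L := L) v) = (σ c * lam) • hat u := by
    intro c
    rw [hsem c]
    simp only [phiFun]
    have h3 : (fun i => σ ((hat (L := L) v) i)) = hat w := by
      funext i
      exact (hw i).symm
    rw [h3, ← hALdef, show AL.mulVec (hat w) = hat (A.mulVec w) from mulVec_hat A w,
      smul_smul, ← hu]
  refine ⟨phiFun σ lam A x₀, u, hu0, ?_⟩
  simp only [hconv, hconvu]
  ext y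
  constructor
  · rintro ⟨z, ⟨c, rfl⟩, rfl⟩
    exact ⟨σ c * lam, by rw [hadd, hkey c]⟩
  · rintro ⟨c, rfl⟩
    refine ⟨x₀ + σ.symm (c * lam⁻¹) • hat v, ⟨σ.symm (c * lam⁻¹), rfl⟩, ?_⟩
    rw [hadd, hkey]
    congr 2
    rw [RingEquiv.apply_symm_apply, mul_assoc, inv_mul_cancel₀ hlam, mul_one]

lemma classify (hq2 : 2 ≤ q) (hK : Fintype.card K = q) {p hh : ℕ} (hp : p.Prime)
    [CharP L p] (hqp : q = p ^ hh)
    (g : (Fin (n + 1) → L) → (Fin (n + 1) → L)) (hg : P n K L g) :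
    ∃ (σ : L ≃+* L) (lam : L) (A : Matrix (Fin (n + 1)) (Fin (n + 1)) K),
      lam ≠ 0 ∧ A.det ≠ 0 ∧ g = phiFun σ lam A := by
  classical
  obtain ⟨hlines, hbij, hadd, σ, hsem⟩ := hg
  haveI : Fact p.Prime := ⟨hp⟩
  have g0 : g 0 = 0 := by
    have h00 := hadd 0 0
    rw [add_zero] at h00
    exact (left_eq_add.mp h00)
  have hginj := hbij.1
  have hgne : ∀ x : Fin (n + 1) → L, x ≠ 0 → g x ≠ 0 := by
    intro x hx h0
    exact hx (hginj (h0.trans g0.symm))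
  -- image of a direction line
  have dir : ∀ v : Fin (n + 1) → K, v ≠ 0 →
      ∃ μ : L, μ ≠ 0 ∧ ∃ w : Fin (n + 1) → K, g (hat v) = μ • hat w := by
    intro v hv
    have hs : IsTLine n K L {y : Fin (n + 1) → L |
        ∃ lam : L, y = 0 + lam • fun i => algebraMap K L (v i)} := ⟨0, v, hv, rfl⟩
    obtain ⟨x₀, w, hwne, him⟩ := hlines _ hs
    have h0mem : (0 : Fin (n + 1) → L) ∈ g '' {y : Fin (n + 1) → L |
        ∃ lam : L, y = 0 + lam • fun i => algebraMap K L (v i)} :=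
      ⟨0, ⟨0, by simp⟩, g0⟩
    have hvmem : g (hat v) ∈ g '' {y : Fin (n + 1) → L |
        ∃ lam : L, y = 0 + lam • fun i => algebraMap K L (v i)} :=
      ⟨hat v, ⟨1, by rw [zero_add, one_smul]; rfl⟩, rfl⟩
    rw [him] at h0mem hvmem
    obtain ⟨lam0, hl0⟩ := h0mem
    obtain ⟨lam1, hl1⟩ := hvmem
    have key : g (hat v) = (lam1 - lam0) • hat w := by
      have hx0 : x₀ = -(lam0 • fun i => algebraMap K L (w i)) := by
        rw [eq_neg_iff_add_eq_zero]
        exact hl0.symm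
      rw [hl1, hx0, sub_smul]
      show -(lam0 • hat (L := L) w) + lam1 • hat w = lam1 • hat w - lam0 • hat w
      abel
    refine ⟨lam1 - lam0, ?_, w, key⟩
    intro hz
    rw [hz, zero_smul] at key
    exact hgne (hat v) (hat_ne_zero hv) key
  -- standard basis vectors
  set e : Fin (n + 1) → (Fin (n + 1) → K) := fun i => Pi.single i 1 with he
  have hene : ∀ i, e i ≠ 0 := by
    intro i h0
    have := congrFun h0 i
    simp [he] at this
  choose μ hμ w hw using fun i => dir (e i) (hene i)
  have hwne : ∀ i, hat (L := L) (w i) ≠ 0 := by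
    intro i h0
    apply hgne (hat (e i)) (hat_ne_zero (hene i))
    rw [hw i, h0, smul_zero]
  -- independence
  have hind : ∀ i : Fin (n + 1), i ≠ 0 → ∀ c : L, hat (L := L) (w 0) ≠ c • hat (w i) := by
    intro i hi c hc
    have h1 : g (hat (e 0)) = (μ 0 * c * (μ i)⁻¹) • g (hat (e i)) := by
      rw [hw 0, hw i, hc, smul_smul, smul_smul]
      congr 1
      field_simp [hμ i]
    have h2 : g (hat (e 0)) = g (σ.symm (μ 0 * c * (μ i)⁻¹) • hat (e i)) := by
      rw [hsem, RingEquiv.apply_symm_apply, h1]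
    have h3 := hginj h2
    have h4 := congrFun h3 0
    have h5 : hat (L := L) (e 0) 0 = 1 := by simp [hat, he]
    have h6 : hat (L := L) (e i) 0 = 0 := by
      simp [hat, he, Pi.single_eq_of_ne (Ne.symm hi)]
    rw [h5] at h4
    simp only [Pi.smul_apply, h6, smul_eq_mul, mul_zero] at h4
    exact one_ne_zero h4
  have hpowq : ∀ k : K, (algebraMap K L k) ^ q = algebraMap K L k := fun k => by
    rw [← map_pow, ← hK, FiniteField.pow_card]
  -- scalars in K
  have hK2 : ∀ i, ∃ kk : K, kk ≠ 0 ∧ algebraMap K L kk = (μ 0)⁻¹ * μ i := by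
    intro i
    rcases eq_or_ne i 0 with rfl | hi
    · exact ⟨1, one_ne_zero, by rw [map_one, inv_mul_cancel₀ (hμ 0)]⟩
    have hsum : μ 0 • hat (L := L) (w 0) + μ i • hat (w i) = g (hat (e 0 + e i)) := by
      rw [hat_add, hadd, hw 0, hw i]
    have hne0i : e 0 + e i ≠ 0 := by
      intro h0
      have := congrFun h0 0
      simp [he, Pi.single_eq_of_ne (Ne.symm hi)] at this
    obtain ⟨ν, hν, u, huu⟩ := dir (e 0 + e i) hne0i
    set η := (μ 0)⁻¹ * μ i with hη
    set ρ := (μ 0)⁻¹ * ν with hρ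
    have E1 : ∀ j, hat (L := L) (w 0) j + η * hat (w i) j = ρ * hat u j := by
      intro j
      have h7 := congrFun (hsum.trans huu) j
      simp only [Pi.add_apply, Pi.smul_apply, smul_eq_mul] at h7
      have hinv : (μ 0)⁻¹ * μ 0 = 1 := inv_mul_cancel₀ (hμ 0)
      rw [hη, hρ]
      linear_combination (μ 0)⁻¹ * h7 - hat (L := L) (w 0) j * hinv
    have hfix : ∀ (vv : Fin (n + 1) → K) (j : Fin (n + 1)),
        (hat (L := L) vv j) ^ q = hat vv j := fun vv j => hpowq (vv j)
    have E2 : ∀ j, hat (L := L) (w 0) j + η ^ q * hat (w i) j = ρ ^ q * hat u j := by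
      intro j
      have h8 : (hat (L := L) (w 0) j + η * hat (w i) j) ^ q = (ρ * hat u j) ^ q := by
        rw [E1 j]
      rw [hqp] at h8
      rw [add_pow_char_pow, mul_pow, mul_pow] at h8
      rw [← hqp] at h8
      linear_combination h8 - hfix (w 0) j - η ^ q * hfix (w i) j + ρ ^ q * hfix u j
    have E3 : ∀ j, (η ^ q - η) * hat (L := L) (w i) j = (ρ ^ q - ρ) * hat u j := by
      intro j
      linear_combination (E2 j) - (E1 j)
    by_cases hηq : η ^ q = η
    · obtain ⟨kk, hkk⟩ := (mem_range_iff_pow hq2 hK η).mpr hηq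
      refine ⟨kk, ?_, hkk⟩
      intro h0
      rw [h0, map_zero] at hkk
      rcases mul_eq_zero.mp hkk.symm with hcase | hcase
      · exact inv_ne_zero (hμ 0) hcase
      · exact hμ i hcase
    · exfalso
      have hρq : ρ ^ q - ρ ≠ 0 := by
        intro h0
        obtain ⟨j, hj⟩ : ∃ j, hat (L := L) (w i) j ≠ 0 := by
          by_contra hc
          push_neg at hc
          exact hwne i (funext hc)
        have := E3 j
        rw [h0, zero_mul] at this
        rcases mul_eq_zero.mp this with h | h
        · exact hηq (sub_eq_zero.mp h)
        · exact hj h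
      have hu_eq : ∀ j, hat (L := L) u j = ((ρ ^ q - ρ)⁻¹ * (η ^ q - η)) * hat (w i) j := by
        intro j
        have := E3 j
        field_simp [hρq]
        linear_combination -(E3 j)
      have : hat (L := L) (w 0) = (ρ * ((ρ ^ q - ρ)⁻¹ * (η ^ q - η)) - η) • hat (w i) := by
        funext j
        have h9 := E1 j
        rw [hu_eq j] at h9
        simp only [Pi.smul_apply, smul_eq_mul]
        linear_combination h9
      exact hind i hi _ this
  choose k hk0 hk using hK2
  -- the matrix
  set A : Matrix (Fin (n + 1)) (Fin (n + 1)) K := Matrix.of fun j i => k i * w i j with hA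
  have hgei : ∀ i, g (hat (e i)) = μ 0 • hat (L := L) (fun j => k i * w i j) := by
    intro i
    rw [hw i]
    funext j
    simp only [Pi.smul_apply, smul_eq_mul, hat, map_mul, hk i]
    have hinv : μ 0 * (μ 0)⁻¹ = 1 := mul_inv_cancel₀ (hμ 0)
    linear_combination (-(μ i * algebraMap K L (w i j))) * hinv
  have hfun : g = phiFun σ (μ 0) A := by
    funext x
    let gh : (Fin (n + 1) → L) →+ (Fin (n + 1) → L) := AddMonoidHom.mk' g (fun a b => hadd a b)
    have hx : x = ∑ i, x i • hat (L := L) (e i) := by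
      funext j
      rw [Finset.sum_apply]
      have hterm : ∀ i, (x i • hat (L := L) (e i)) j = x i * (if j = i then 1 else 0) := by
        intro i
        simp [hat, he, Pi.single_apply]
      simp_rw [hterm, mul_ite, mul_one, mul_zero]
      simp
    calc g x = gh (∑ i, x i • hat (L := L) (e i)) := by rw [← hx]; rfl
      _ = ∑ i, gh (x i • hat (L := L) (e i)) := map_sum gh _ _
      _ = ∑ i, σ (x i) • (μ 0 • hat (L := L) (fun j => k i * w i j)) := by
          refine Finset.sum_congr rfl fun i _ => ?_
          show g (x i • hat (L := L) (e i)) = _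
          rw [hsem, hgei i]
      _ = phiFun σ (μ 0) A x := by
          funext j
          rw [Finset.sum_apply]
          simp only [phiFun, Pi.smul_apply, smul_eq_mul, Matrix.mulVec, dotProduct,
            Matrix.map_apply, hat, Finset.mul_sum, hA, Matrix.of_apply]
          refine Finset.sum_congr rfl fun i _ => ?_
          ring
  have hdet : A.det ≠ 0 := by
    intro h0
    obtain ⟨v, hv0, hv⟩ := (Matrix.exists_mulVec_eq_zero_iff).mpr h0
    set x : Fin (n + 1) → L := fun i => σ.symm (algebraMap K L (v i)) with hxdef
    have hx0 : x ≠ 0 := by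
      intro hz
      apply hv0
      funext i
      have h1 : σ.symm (algebraMap K L (v i)) = 0 := congrFun hz i
      have h2 : algebraMap K L (v i) = 0 := by
        apply σ.symm.injective
        rw [h1, map_zero]
      have h3 : v i = 0 := (algebraMap K L).injective (by rw [h2, map_zero])
      simpa using h3
    have hgx : g x = 0 := by
      rw [hfun]
      simp only [phiFun]
      have hσx : (fun i => σ (x i)) = hat v := by
        funext i
        simp [hxdef, hat]
      rw [hσx, mulVec_hat, hv]
      have : hat (L := L) (0 : Fin (n + 1) → K) = 0 := by
        funext i
        simp [hat]
      rw [this, smul_zero]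
    exact hgne x hx0 hgx
  exact ⟨σ, μ 0, A, hμ 0, hdet, hfun⟩

lemma fib (σ σ' : L ≃+* L) (lam lam' : L) (A A' : Matrix (Fin (n + 1)) (Fin (n + 1)) K)
    (hlam : lam ≠ 0) (hlam' : lam' ≠ 0) (hA : A.det ≠ 0)
    (heq : phiFun σ lam A = phiFun σ' lam' A') :
    σ = σ' ∧ ∃ μ : K, μ ≠ 0 ∧ A' = μ • A ∧ lam' * algebraMap K L μ = lam := by
  classical
  have key : ∀ (i j : Fin (n + 1)) (s : L),
      lam * (algebraMap K L (A j i) * σ s) = lam' * (algebraMap K L (A' j i) * σ' s) := by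
    intro i j s
    have h1 := congrFun (congrFun heq (Pi.single i s)) j
    simp only [phiFun] at h1
    have hs : ∀ τ : L ≃+* L, (fun k => τ ((Pi.single i s : Fin (n + 1) → L) k)) = Pi.single i (τ s) := by
      intro τ
      funext kk
      rcases eq_or_ne kk i with rfl | hkk
      · simp
      · simp [Pi.single_eq_of_ne hkk]
    rw [hs σ, hs σ', Matrix.mulVec_single, Matrix.mulVec_single] at h1
    simp [Matrix.map_apply] at h1 ⊢
    linear_combination h1
  have hent : ∀ j i, lam * algebraMap K L (A j i) = lam' * algebraMap K L (A' j i) := by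
    intro j i
    have := key i j 1
    simpa using this
  have hA0 : A ≠ 0 := by
    rintro rfl
    simp [Matrix.det_zero] at hA
  obtain ⟨j0, i0, hji⟩ : ∃ j i, A j i ≠ 0 := by
    by_contra hc
    push_neg at hc
    exact hA0 (by ext j i; simpa using hc j i)
  have hAL : algebraMap K L (A j0 i0) ≠ 0 := fun hx =>
    hji ((algebraMap K L).injective (by simpa using hx))
  have hlA : lam * algebraMap K L (A j0 i0) ≠ 0 := mul_ne_zero hlam hAL
  have hσ : σ = σ' := by
    ext s
    have h1 := key i0 j0 s
    rw [show lam' * (algebraMap K L (A' j0 i0) * σ' s)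
        = lam' * algebraMap K L (A' j0 i0) * σ' s by ring, ← hent j0 i0] at h1
    rw [show lam * (algebraMap K L (A j0 i0) * σ s)
        = lam * algebraMap K L (A j0 i0) * σ s by ring] at h1
    exact mul_left_cancel₀ hlA h1
  have hA'L : algebraMap K L (A' j0 i0) ≠ 0 := by
    intro hx
    apply hlA
    rw [hent j0 i0, hx, mul_zero]
  have hA'ji : A' j0 i0 ≠ 0 := fun hx => hA'L (by rw [hx, map_zero])
  refine ⟨hσ, A' j0 i0 / A j0 i0, div_ne_zero hA'ji hji, ?_, ?_⟩
  · ext j i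
    simp only [Matrix.smul_apply, smul_eq_mul]
    apply (algebraMap K L).injective
    rw [map_mul, map_div₀]
    have h1 := hent j i
    have h2 := hent j0 i0
    have hlam'0 : lam' ≠ 0 := hlam'
    field_simp
    -- goal: algebraMap (A' j i) * (algebraMap (A j0 i0)) = algebraMap (A' j0 i0) * algebraMap (A j i)  (up to arrangement)
    have hcalc : lam' * (algebraMap K L (A' j i) * algebraMap K L (A j0 i0))
        = lam' * (algebraMap K L (A' j0 i0) * algebraMap K L (A j i)) := by
      calc lam' * (algebraMap K L (A' j i) * algebraMap K L (A j0 i0))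
          = (lam' * algebraMap K L (A' j i)) * algebraMap K L (A j0 i0) := by ring
        _ = (lam * algebraMap K L (A j i)) * algebraMap K L (A j0 i0) := by rw [h1]
        _ = (lam * algebraMap K L (A j0 i0)) * algebraMap K L (A j i) := by ring
        _ = (lam' * algebraMap K L (A' j0 i0)) * algebraMap K L (A j i) := by rw [h2]
        _ = lam' * (algebraMap K L (A' j0 i0) * algebraMap K L (A j i)) := by ring
    have := mul_left_cancel₀ hlam'0 hcalc
    linear_combination this
  · have h2 := hent j0 i0
    rw [map_div₀, mul_div_assoc', div_eq_iff hAL]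
    linear_combination -h2

lemma fib_rev (σ : L ≃+* L) (lam lam' : L) (A A' : Matrix (Fin (n + 1)) (Fin (n + 1)) K)
    (μ : K) (hμ : μ ≠ 0) (hA' : A' = μ • A) (hl : lam' * algebraMap K L μ = lam) :
    phiFun σ lam A = phiFun σ lam' A' := by
  funext x
  have hmap : (A'.map (algebraMap K L)) = algebraMap K L μ • A.map (algebraMap K L) := by
    ext i j
    simp [hA', Matrix.map_apply, Matrix.smul_apply, map_mul]
  simp only [phiFun, hmap, Matrix.smul_mulVec, smul_smul, hl]

lemma P_of_geomAut {α : Equiv.Perm (Fin (n + 1) → L)} (hα : IsGeomAut n K L α) :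
    P n K L (fun x => α x - α 0) := by
  obtain ⟨hlines, σ, g₀, c, hbij, hadd, hsem, hval⟩ := hα
  have hg0 : g₀ 0 = 0 := by
    have h00 := hadd 0 0
    rw [add_zero] at h00
    exact left_eq_add.mp h00
  have hc : α 0 = c := by rw [hval 0, hg0, zero_add]
  have hgeq : (fun x => α x - α 0) = g₀ := by
    funext x
    rw [hval x, hc]
    abel
  rw [hgeq]
  refine ⟨?_, hbij, hadd, σ, hsem⟩
  intro s hs
  have himg : g₀ '' s = (fun y => y + (-c)) '' (⇑α '' s) := by
    rw [Set.image_image]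
    apply Set.image_congr
    intro x _
    rw [hval x]
    abel
  rw [himg]
  exact translate_line _ (hlines s hs)

lemma card_aut :
    Nat.card {α : Equiv.Perm (Fin (n + 1) → L) // IsGeomAut n K L α}
      = Nat.card ((Fin (n + 1) → L) ×
          {g : (Fin (n + 1) → L) → (Fin (n + 1) → L) // P n K L g}) := by
  apply Nat.card_eq_of_bijective
    (fun α => (α.1 0, ⟨fun x => α.1 x - α.1 0, P_of_geomAut α.2⟩))
  constructor
  · rintro ⟨α, hα⟩ ⟨β, hβ⟩ hab
    simp only [Prod.mk.injEq, Subtype.mk.injEq] at hab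
    obtain ⟨h1, h2⟩ := hab
    apply Subtype.ext
    apply Equiv.ext
    intro x
    have h3 := congrFun h2 x
    rw [h1] at h3
    exact sub_left_inj.mp h3
  · rintro ⟨c, g, hg⟩
    obtain ⟨hl, hb, ha, σ, hsem⟩ := hg
    have hg0 : g 0 = 0 := by
      have h00 := ha 0 0
      rw [add_zero] at h00
      exact left_eq_add.mp h00
    set α : Equiv.Perm (Fin (n + 1) → L) :=
      (Equiv.ofBijective g hb).trans (Equiv.addRight c) with hα
    have hαval : ∀ x, α x = g x + c := by
      intro x
      simp [hα, Equiv.trans_apply, Equiv.ofBijective_apply, Equiv.coe_addRight]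
    have hgeom : IsGeomAut n K L α := by
      constructor
      · intro s hs
        have himg : ⇑α '' s = (fun y => y + c) '' (g '' s) := by
          rw [Set.image_image]
          apply Set.image_congr
          intro x _
          rw [hαval x]
        rw [himg]
        exact translate_line _ (hl s hs)
      · exact ⟨σ, g, c, hb, ha, hsem, hαval⟩
    refine ⟨⟨α, hgeom⟩, ?_⟩
    have hα0 : α 0 = c := by rw [hαval 0, hg0, zero_add]
    simp only [Prod.mk.injEq, Subtype.mk.injEq]
    constructor
    · exact hα0
    · apply Subtype.ext
      funext x
      show α x - α 0 = g x
      rw [hαval x, hα0]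
      abel

section Counting

variable [Fintype K] [Fintype L] {q : ℕ}

lemma card_G (hq2 : 2 ≤ q) (hK : Fintype.card K = q) {p hh : ℕ} (hp : p.Prime)
    [CharP L p] (hqp : q = p ^ hh) :
    Nat.card {g : (Fin (n + 1) → L) → (Fin (n + 1) → L) // P n K L g}
        * Nat.card {k : K // k ≠ 0}
      = Nat.card ((L ≃+* L) × {l : L // l ≠ 0} ×
          {A : Matrix (Fin (n + 1)) (Fin (n + 1)) K // A.det ≠ 0}) := by
  classical
  haveI : Finite (L ≃+* L) :=
    Finite.of_injective (fun σ : L ≃+* L => (σ : L → L)) DFunLike.coe_injective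
  set G := {g : (Fin (n + 1) → L) → (Fin (n + 1) → L) // P n K L g} with hG
  set D := ((L ≃+* L) × {l : L // l ≠ 0} ×
      {A : Matrix (Fin (n + 1)) (Fin (n + 1)) K // A.det ≠ 0}) with hD
  haveI : Fintype G := Fintype.ofFinite _
  haveI : Fintype D := Fintype.ofFinite _
  let Φ : D → G := fun d => ⟨phiFun d.1 d.2.1.1 d.2.2.1,
    phi_mem_P hq2 hK d.1 d.2.1.1 d.2.2.1 d.2.1.2 d.2.2.2⟩
  have hfib : ∀ gg : G, Nat.card {d : D // Φ d = gg} = Nat.card {k : K // k ≠ 0} := by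
    intro gg
    obtain ⟨σ0, lam0, A0, hlam0, hA0, hg0⟩ := classify hq2 hK hp hqp gg.1 gg.2
    have hA0ne : A0 ≠ 0 := by
      rintro rfl
      simp [Matrix.det_zero] at hA0
    obtain ⟨j0, i0, hji⟩ : ∃ j i, A0 j i ≠ 0 := by
      by_contra hc
      push_neg at hc
      exact hA0ne (by ext j i; simpa using hc j i)
    have hμL : ∀ μ : {k : K // k ≠ 0}, algebraMap K L μ.1 ≠ 0 := fun μ hx =>
      μ.2 ((algebraMap K L).injective (by simpa using hx))
    have hlam' : ∀ μ : {k : K // k ≠ 0}, lam0 * (algebraMap K L μ.1)⁻¹ ≠ 0 := fun μ =>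
      mul_ne_zero hlam0 (inv_ne_zero (hμL μ))
    have hdet' : ∀ μ : {k : K // k ≠ 0}, (μ.1 • A0).det ≠ 0 := by
      intro μ
      rw [Matrix.det_smul]
      exact mul_ne_zero (pow_ne_zero _ μ.2) hA0
    have hΦ : ∀ μ : {k : K // k ≠ 0},
        Φ (σ0, ⟨lam0 * (algebraMap K L μ.1)⁻¹, hlam' μ⟩, ⟨μ.1 • A0, hdet' μ⟩) = gg := by
      intro μ
      apply Subtype.ext
      show phiFun σ0 (lam0 * (algebraMap K L μ.1)⁻¹) (μ.1 • A0) = gg.1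
      rw [hg0]
      symm
      apply fib_rev σ0 lam0 _ A0 _ μ.1 μ.2 rfl
      rw [mul_assoc, inv_mul_cancel₀ (hμL μ), mul_one]
    symm
    apply Nat.card_eq_of_bijective (fun μ : {k : K // k ≠ 0} =>
      (⟨(σ0, ⟨lam0 * (algebraMap K L μ.1)⁻¹, hlam' μ⟩, ⟨μ.1 • A0, hdet' μ⟩), hΦ μ⟩ :
        {d : D // Φ d = gg}))
    constructor
    · intro μ μ' hμμ
      have h5 := congrArg (fun d : {d : D // Φ d = gg} => d.1.2.2.1 j0 i0) hμμ
      simp only [Matrix.smul_apply, smul_eq_mul] at h5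
      exact Subtype.ext (mul_right_cancel₀ hji h5)
    · rintro ⟨⟨σd, lamd, Ad⟩, hd⟩
      have heq : phiFun σd lamd.1 Ad.1 = phiFun σ0 lam0 A0 := by
        have h6 := congrArg Subtype.val hd
        simp only [Φ] at h6
        rw [h6, hg0]
      obtain ⟨hσ, μ', hμ'0, hA0eq, hlam⟩ :=
        fib σd σ0 lamd.1 lam0 Ad.1 A0 lamd.2 hlam0 Ad.2 heq
      refine ⟨⟨μ'⁻¹, inv_ne_zero hμ'0⟩, ?_⟩
      apply Subtype.ext
      show (σ0, _, _) = (σd, lamd, Ad)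
      simp only [Prod.mk.injEq]
      refine ⟨hσ.symm, Subtype.ext ?_, Subtype.ext ?_⟩
      · show lam0 * (algebraMap K L μ'⁻¹)⁻¹ = lamd.1
        rw [map_inv₀, inv_inv]
        exact hlam
      · show μ'⁻¹ • A0 = Ad.1
        rw [hA0eq, smul_smul, inv_mul_cancel₀ hμ'0, one_smul]
  letI : ∀ gg : G, Fintype {d : D // Φ d = gg} := fun gg => Fintype.ofFinite _
  have h1 : Nat.card D = ∑ gg : G, Fintype.card {d : D // Φ d = gg} := by
    rw [Nat.card_congr (Equiv.sigmaFiberEquiv Φ).symm, Nat.card_eq_fintype_card,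
      Fintype.card_sigma]
  have h2 : ∀ gg : G, Fintype.card {d : D // Φ d = gg} = Nat.card {k : K // k ≠ 0} := by
    intro gg
    rw [← Nat.card_eq_fintype_card]
    exact hfib gg
  rw [h1, Finset.sum_congr rfl (fun gg _ => h2 gg), Finset.sum_const, Finset.card_univ,
    smul_eq_mul, Nat.card_eq_fintype_card]

end Counting

lemma card_gl [DecidableEq K] :
    Nat.card {A : Matrix (Fin (n + 1)) (Fin (n + 1)) K // A.det ≠ 0}
      = Nat.card (Matrix.GeneralLinearGroup (Fin (n + 1)) K) := by
  symm
  apply Nat.card_eq_of_bijective (fun u : Matrix.GeneralLinearGroup (Fin (n + 1)) K =>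
    (⟨(u : Matrix (Fin (n + 1)) (Fin (n + 1)) K),
      ((Matrix.isUnit_iff_isUnit_det _).mp u.isUnit).ne_zero⟩ :
      {A : Matrix (Fin (n + 1)) (Fin (n + 1)) K // A.det ≠ 0}))
  constructor
  · intro u u' huu
    exact Units.ext (congrArg Subtype.val huu)
  · rintro ⟨A, hA⟩
    have hu : IsUnit A := (Matrix.isUnit_iff_isUnit_det A).mpr hA.isUnit
    exact ⟨hu.unit, Subtype.ext hu.unit_spec⟩

lemma charP_of_card {p m : ℕ} (hp : p.Prime) (hm : 0 < m)
    (hL : Fintype.card L = p ^ m) : CharP L p := by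
  obtain ⟨r, hr⟩ := CharP.exists L
  haveI := hr
  have hrp : r.Prime := CharP.char_is_prime L r
  obtain ⟨mm, hmm⟩ := FiniteField.card L r
  have hdvd : r ∣ p ^ m := by
    rw [← hL, hmm.2]
    exact dvd_pow_self r mm.ne_zero
  have : r = p := (Nat.prime_dvd_prime_iff_eq hrp hp).mp (hrp.dvd_of_dvd_pow hdvd)
  rwa [this] at hr

lemma card_ringEquiv {p m : ℕ} (hp : p.Prime) [CharP L p]
    (hL : Fintype.card L = p ^ m) : Nat.card (L ≃+* L) = m := by
  haveI : Fact p.Prime := ⟨hp⟩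
  letI : Algebra (ZMod p) L := ZMod.algebra L p
  have hfr : Module.finrank (ZMod p) L = m := by
    have hcard : Fintype.card L = p ^ Module.finrank (ZMod p) L := by
      have := Module.card_eq_pow_finrank (K := ZMod p) (V := L)
      rwa [ZMod.card] at this
    exact Nat.pow_right_injective hp.two_le (hcard.symm.trans hL)
  have hgal : Fintype.card (L ≃ₐ[ZMod p] L) = m := by
    rw [← Nat.card_eq_fintype_card, IsGalois.card_aut_eq_finrank, hfr]
  have hbij : Function.Bijective (fun e : L ≃ₐ[ZMod p] L => e.toRingEquiv) := by
    constructor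
    · intro a b hab
      ext x
      exact congrArg (fun e => e.toFun x) hab
    · intro σ
      refine ⟨AlgEquiv.ofRingEquiv (f := σ) ?_, rfl⟩
      intro x
      exact RingHom.congr_fun
        (RingHom.ext_zmod (σ.toRingHom.comp (algebraMap (ZMod p) L)) (algebraMap (ZMod p) L)) x
  rw [← Nat.card_eq_of_bijective _ hbij, Nat.card_eq_fintype_card, hgal]

lemma card_nonzero : Nat.card {l : L // l ≠ 0} = Fintype.card L - 1 := by
  classical
  rw [← Nat.card_congr (unitsEquivNeZero (G₀ := L)), Nat.card_eq_fintype_card,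
    Fintype.card_units]

end Phi

end S3

/-- The geometric automorphism group of `T_n*(S)` has cardinality
`q^{t(n+1)} · (q^t − 1) · t · h · |GL_{n+1}(F_q)| / (q−1)`. -/
theorem stmt3 (p h n t : ℕ) (hp : p.Prime) (hh : 0 < h) (hn : 1 ≤ n) (ht : 2 ≤ t)
    (q : ℕ) (hq : q = p ^ h)
    (K L : Type) [Field K] [Field L] [Algebra K L] [Fintype K] [Fintype L]
    (hK : Fintype.card K = q) (hL : Fintype.card L = q ^ t)
    (hdeg : Module.finrank K L = t) :
    Nat.card {α : Equiv.Perm (Fin (n + 1) → L) // IsGeomAut n K L α} * (q - 1)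
      = q ^ (t * (n + 1)) * (q ^ t - 1) * t * h *
          Nat.card (Matrix.GeneralLinearGroup (Fin (n + 1)) K) := by
  classical
  have hq2 : 2 ≤ q := by
    have h1 : p ≤ p ^ h := Nat.le_self_pow hh.ne' p
    have h2 := hp.two_le
    omega
  have hLcard : Fintype.card L = p ^ (h * t) := by rw [hL, hq, ← pow_mul]
  haveI : CharP L p := S3.charP_of_card hp (by positivity) hLcard
  have hRE : Nat.card (L ≃+* L) = h * t := S3.card_ringEquiv hp hLcard
  have hKnz : Nat.card {k : K // k ≠ 0} = q - 1 := by rw [S3.card_nonzero, hK]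
  have hLnz : Nat.card {l : L // l ≠ 0} = q ^ t - 1 := by rw [S3.card_nonzero, hL]
  have hGL := S3.card_gl (n := n) (K := K)
  have hGeq := S3.card_G (n := n) (K := K) (L := L) hq2 hK hp hq
  rw [Nat.card_prod, Nat.card_prod, hRE, hLnz, hGL, hKnz] at hGeq
  rw [S3.card_aut, Nat.card_prod]
  have hcardfun : Nat.card (Fin (n + 1) → L) = q ^ (t * (n + 1)) := by
    rw [Nat.card_eq_fintype_card, Fintype.card_fun, hL, Fintype.card_fin, ← pow_mul]
  rw [hcardfun, mul_assoc, hGeq]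
  ring
end

section
/- The geometries X(n,t,q) and T_n*(S) are isomorphic: taking V = K^t × K^{n+1} and W = {0} × K^{n+1} with K the field of q elements, there exists a bijection Φ from the set of points of X(n,t,q) to L^{n+1} such that for every line l of X(n,t,q), the image under Φ of the set of points incident with l is a line of T_n*(S), and every line of T_n*(S) arises in this way from a unique line of X(n,t,q). -/
/-- The subspace `W = {0} × K^{n+1}` of `V = K^t × K^{n+1}`. -/
def Wsub (K : Type) [Field K] (n t : ℕ) :
    Submodule K ((Fin t → K) × (Fin (n + 1) → K)) :=
  (⊥ : Submodule K (Fin t → K)).prod (⊤ : Submodule K (Fin (n + 1) → K))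

/-- The points of `X(n,t,q)`: the `t`-dimensional subspaces of `V = K^t × K^{n+1}` meeting
`W = {0} × K^{n+1}` trivially. -/
def XPoint (K : Type) [Field K] (n t : ℕ) : Type :=
  {U : Submodule K ((Fin t → K) × (Fin (n + 1) → K)) //
    Module.finrank K ↥U = t ∧ U ⊓ Wsub K n t = ⊥}

/-- The lines of `X(n,t,q)`: the `(t+1)`-dimensional subspaces of `V = K^t × K^{n+1}`
meeting `W = {0} × K^{n+1}` in a `1`-dimensional subspace. -/
def IsXLine (K : Type) [Field K] (n t : ℕ)
    (l : Submodule K ((Fin t → K) × (Fin (n + 1) → K))) : Prop :=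
  Module.finrank K ↥l = t + 1 ∧ Module.finrank K ↥(l ⊓ Wsub K n t) = 1

section Aux
variable {K : Type} [Field K] {n t : ℕ}

lemma mem_Wsub {x : (Fin t → K) × (Fin (n + 1) → K)} : x ∈ Wsub K n t ↔ x.1 = 0 := by
  simp [Wsub, Submodule.mem_prod]

lemma graph_finrank (f : (Fin t → K) →ₗ[K] (Fin (n + 1) → K)) :
    Module.finrank K ↥f.graph = t := by
  have h1 : f.graph = LinearMap.range ((LinearMap.id : (Fin t → K) →ₗ[K] _).prod f) := by
    ext x
    simp only [LinearMap.mem_graph_iff, LinearMap.mem_range, LinearMap.prod_apply,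
      LinearMap.id_apply, Pi.prod, Prod.ext_iff]
    constructor
    · intro hx; exact ⟨x.1, rfl, hx.symm⟩
    · rintro ⟨y, rfl, h2⟩; exact h2.symm
  have hinj : Function.Injective ⇑((LinearMap.id : (Fin t → K) →ₗ[K] _).prod f) := by
    intro a b hab
    simpa using congrArg Prod.fst hab
  rw [h1, LinearMap.finrank_range_of_inj hinj, Module.finrank_pi, Fintype.card_fin]

lemma graph_inf_W (f : (Fin t → K) →ₗ[K] (Fin (n + 1) → K)) :
    f.graph ⊓ Wsub K n t = ⊥ := by
  ext x
  simp only [Submodule.mem_inf, LinearMap.mem_graph_iff, mem_Wsub, Submodule.mem_bot]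
  constructor
  · rintro ⟨h1, h2⟩
    have : x.2 = 0 := by rw [h1, h2, map_zero]
    exact Prod.ext h2 this
  · rintro rfl; simp

lemma graph_injective' {f g : (Fin t → K) →ₗ[K] (Fin (n + 1) → K)}
    (h : f.graph = g.graph) : f = g := by
  refine LinearMap.ext fun x => ?_
  have : (x, f x) ∈ g.graph := by rw [← h]; exact (f.mem_graph_iff _).mpr rfl
  rw [LinearMap.mem_graph_iff] at this
  exact this

lemma exists_graph {U : Submodule K ((Fin t → K) × (Fin (n + 1) → K))}
    (h1 : Module.finrank K ↥U = t) (h2 : U ⊓ Wsub K n t = ⊥) :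
    ∃ f : (Fin t → K) →ₗ[K] (Fin (n + 1) → K), f.graph = U := by
  set π : ↥U →ₗ[K] (Fin t → K) := (LinearMap.fst K _ _).comp U.subtype with hπ
  have hinj : Function.Injective ⇑π := by
    rw [← LinearMap.ker_eq_bot]
    ext x
    simp only [LinearMap.mem_ker, Submodule.mem_bot, hπ, LinearMap.comp_apply,
      LinearMap.fst_apply, Submodule.coe_subtype]
    constructor
    · intro hx
      have hxW : (x : (Fin t → K) × (Fin (n + 1) → K)) ∈ U ⊓ Wsub K n t :=
        ⟨x.2, mem_Wsub.mpr hx⟩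
      rw [h2, Submodule.mem_bot] at hxW
      exact Subtype.ext hxW
    · rintro rfl; rfl
  have hdim : Module.finrank K ↥U = Module.finrank K (Fin t → K) := by
    rw [h1, Module.finrank_pi, Fintype.card_fin]
  set e := π.linearEquivOfInjective hinj hdim with he
  refine ⟨(LinearMap.snd K _ _).comp (U.subtype.comp (e.symm : (Fin t → K) →ₗ[K] ↥U)), ?_⟩
  have hfst : ∀ z : Fin t → K, ((e.symm z : ↥U) : (Fin t → K) × (Fin (n + 1) → K)).1 = z := by
    intro z
    have := e.apply_symm_apply z
    rwa [he, LinearMap.linearEquivOfInjective_apply] at this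
  ext x
  simp only [LinearMap.mem_graph_iff, LinearMap.comp_apply, LinearMap.snd_apply,
    Submodule.coe_subtype, LinearEquiv.coe_coe]
  constructor
  · intro hx
    have : x = ((e.symm x.1 : ↥U) : (Fin t → K) × (Fin (n + 1) → K)) := by
      refine Prod.ext ?_ hx
      exact (hfst x.1).symm
    rw [this]; exact (e.symm x.1).2
  · intro hx
    have hse : e.symm x.1 = ⟨x, hx⟩ := by
      apply e.injective
      rw [e.apply_symm_apply, he, LinearMap.linearEquivOfInjective_apply]
      rfl
    rw [hse]

/-- Points on a line, parametrized. -/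
lemma points_le_line {l : Submodule K ((Fin t → K) × (Fin (n + 1) → K))}
    {f₀ : (Fin t → K) →ₗ[K] (Fin (n + 1) → K)} {w : Fin (n + 1) → K}
    (hf₀ : f₀.graph ≤ l) (hw : w ≠ 0)
    (hlW : l ⊓ Wsub K n t = Submodule.span K {((0, w) : (Fin t → K) × (Fin (n + 1) → K))})
    (U : Submodule K ((Fin t → K) × (Fin (n + 1) → K))) :
    ((Module.finrank K ↥U = t ∧ U ⊓ Wsub K n t = ⊥) ∧ U ≤ l) ↔
      ∃ φ : (Fin t → K) →ₗ[K] K, U = (f₀ + φ.smulRight w).graph := by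
  have hwl : ((0, w) : (Fin t → K) × (Fin (n + 1) → K)) ∈ l := by
    have : ((0, w) : (Fin t → K) × (Fin (n + 1) → K)) ∈ l ⊓ Wsub K n t := by
      rw [hlW]; exact Submodule.mem_span_singleton_self _
    exact this.1
  constructor
  · rintro ⟨⟨h1, h2⟩, hUl⟩
    obtain ⟨f, rfl⟩ := exists_graph h1 h2
    obtain ⟨j, hj⟩ : ∃ j, w j ≠ 0 := by
      by_contra hc
      push_neg at hc
      exact hw (funext hc)
    set φ : (Fin t → K) →ₗ[K] K := (w j)⁻¹ • ((LinearMap.proj j).comp (f - f₀)) with hφ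
    refine ⟨φ, ?_⟩
    have hfe : f = f₀ + φ.smulRight w := by
      refine LinearMap.ext fun x => funext fun i => ?_
      have hx1 : (x, f x) ∈ l := hUl ((f.mem_graph_iff _).mpr rfl)
      have hx2 : (x, f₀ x) ∈ l := hf₀ ((f₀.mem_graph_iff _).mpr rfl)
      have hd : ((0, f x - f₀ x) : (Fin t → K) × (Fin (n + 1) → K)) ∈ l ⊓ Wsub K n t := by
        constructor
        · have := l.sub_mem hx1 hx2
          simpa using this
        · exact mem_Wsub.mpr rfl
      rw [hlW, Submodule.mem_span_singleton] at hd
      obtain ⟨c, hc⟩ := hd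
      have hc2 : f x - f₀ x = c • w := (congrArg Prod.snd hc).symm
      have hcval : c = φ x := by
        have := congrFun hc2 j
        simp only [Pi.sub_apply, Pi.smul_apply, smul_eq_mul] at this
        rw [hφ]
        simp only [LinearMap.smul_apply, LinearMap.comp_apply, LinearMap.proj_apply,
          LinearMap.sub_apply, Pi.sub_apply, smul_eq_mul]
        field_simp [this]
        exact this.symm
      have := congrFun hc2 i
      simp only [Pi.sub_apply, Pi.smul_apply, smul_eq_mul] at this
      simp only [LinearMap.add_apply, Pi.add_apply, LinearMap.smulRight_apply,
        Pi.smul_apply, smul_eq_mul]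
      rw [← hcval]
      linear_combination this
    rw [← hfe]
  · rintro ⟨φ, rfl⟩
    refine ⟨⟨graph_finrank _, graph_inf_W _⟩, ?_⟩
    intro x hx
    rw [LinearMap.mem_graph_iff] at hx
    have hx2 : x = (x.1, f₀ x.1) + φ x.1 • ((0, w) : (Fin t → K) × (Fin (n + 1) → K)) := by
      refine Prod.ext ?_ ?_
      · simp
      · simp [hx]
    rw [hx2]
    exact l.add_mem (hf₀ ((f₀.mem_graph_iff _).mpr rfl)) (l.smul_mem _ hwl)

end Aux

section Aux2
variable {K : Type} [Field K] {n t : ℕ}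

lemma exists_basepoint {l : Submodule K ((Fin t → K) × (Fin (n + 1) → K))}
    (hl : IsXLine K n t l) :
    ∃ (f₀ : (Fin t → K) →ₗ[K] (Fin (n + 1) → K)) (w : Fin (n + 1) → K),
      f₀.graph ≤ l ∧ w ≠ 0 ∧
      l ⊓ Wsub K n t = Submodule.span K {((0, w) : (Fin t → K) × (Fin (n + 1) → K))} := by
  obtain ⟨hl1, hl2⟩ := hl
  -- generator of l ⊓ W
  have hne : l ⊓ Wsub K n t ≠ ⊥ := by
    intro hbot
    rw [hbot] at hl2
    simp at hl2
  obtain ⟨x, hxmem, hxne⟩ := Submodule.exists_mem_ne_zero_of_ne_bot hne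
  have hspan : l ⊓ Wsub K n t = Submodule.span K {x} := by
    refine (Submodule.eq_of_le_of_finrank_eq ?_ ?_).symm
    · rw [Submodule.span_le, Set.singleton_subset_iff]; exact hxmem
    · rw [finrank_span_singleton hxne, hl2]
  have hx1 : x.1 = 0 := mem_Wsub.mp hxmem.2
  have hxw : x = (0, x.2) := Prod.ext hx1 rfl
  have hw : x.2 ≠ 0 := by
    intro h0
    exact hxne (by rw [hxw, h0]; rfl)
  -- complement
  set p' : Submodule K ↥l := Submodule.comap l.subtype (l ⊓ Wsub K n t) with hp'
  obtain ⟨qc, hqc⟩ := Submodule.exists_isCompl p'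
  set U₀ := Submodule.map l.subtype qc with hU₀
  have hU₀le : U₀ ≤ l := Submodule.map_subtype_le _ _
  have hmapp' : Submodule.map l.subtype p' = l ⊓ Wsub K n t := by
    rw [hp', Submodule.map_comap_subtype, inf_eq_right.mpr inf_le_left]
  have hfrp' : Module.finrank K ↥p' = 1 := by
    have := Submodule.finrank_map_subtype_eq l p'
    rw [hmapp', hl2] at this
    exact this.symm
  have hfrU₀ : Module.finrank K ↥U₀ = t := by
    have hcompl := Submodule.finrank_add_eq_of_isCompl hqc.symm
    rw [hfrp', hl1] at hcompl
    rw [hU₀, Submodule.finrank_map_subtype_eq]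
    omega
  have hU₀W : U₀ ⊓ Wsub K n t = ⊥ := by
    have h1 : U₀ ⊓ Wsub K n t = U₀ ⊓ (l ⊓ Wsub K n t) := by
      rw [← inf_assoc, inf_eq_left.mpr hU₀le]
    rw [h1, ← hmapp', hU₀, ← Submodule.map_inf l.subtype (Subtype.val_injective),
      hqc.symm.inf_eq_bot, Submodule.map_bot]
  obtain ⟨f₀, hf₀⟩ := exists_graph hfrU₀ hU₀W
  exact ⟨f₀, x.2, by rw [hf₀]; exact hU₀le, hw, by rw [hspan, ← hxw]⟩

lemma construct_line (f₀ : (Fin t → K) →ₗ[K] (Fin (n + 1) → K)) {w : Fin (n + 1) → K}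
    (hw : w ≠ 0) :
    IsXLine K n t (f₀.graph ⊔ Submodule.span K {((0, w) : (Fin t → K) × (Fin (n + 1) → K))}) ∧
    f₀.graph ≤ f₀.graph ⊔ Submodule.span K {((0, w) : (Fin t → K) × (Fin (n + 1) → K))} ∧
    (f₀.graph ⊔ Submodule.span K {((0, w) : (Fin t → K) × (Fin (n + 1) → K))}) ⊓ Wsub K n t =
      Submodule.span K {((0, w) : (Fin t → K) × (Fin (n + 1) → K))} := by
  set sp := Submodule.span K {((0, w) : (Fin t → K) × (Fin (n + 1) → K))} with hsp
  have hwne : ((0, w) : (Fin t → K) × (Fin (n + 1) → K)) ≠ 0 := by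
    intro h0
    exact hw (congrArg Prod.snd h0)
  have hinf : f₀.graph ⊓ sp = ⊥ := by
    rw [eq_bot_iff]
    rintro x ⟨hxg, hxs⟩
    obtain ⟨c, rfl⟩ := Submodule.mem_span_singleton.mp hxs
    have hxg2 := (LinearMap.mem_graph_iff f₀ _).mp hxg
    simp only [Prod.smul_mk, smul_zero, map_zero] at hxg2
    have hxg := hxg2
    have hc : c = 0 := by
      by_contra hc0
      apply hw
      have : c • w = 0 := hxg
      simpa [hc0] using congrArg (fun y => c⁻¹ • y) this
    simp [hc]
  have hWinf : (f₀.graph ⊔ sp) ⊓ Wsub K n t = sp := by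
    apply le_antisymm
    · rintro x ⟨hxl, hxW⟩
      obtain ⟨a, ha, b, hb, rfl⟩ := Submodule.mem_sup.mp hxl
      obtain ⟨c, rfl⟩ := Submodule.mem_span_singleton.mp hb
      have ha1 : a.1 = 0 := by
        have := mem_Wsub.mp hxW
        simpa using this
      have ha2 : a.2 = 0 := by
        rw [(LinearMap.mem_graph_iff f₀ _).mp ha, ha1, map_zero]
      have : a = 0 := Prod.ext ha1 ha2
      rw [this, zero_add]
      exact Submodule.smul_mem _ _ (Submodule.mem_span_singleton_self _)
    · refine le_inf le_sup_right ?_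
      rw [hsp, Submodule.span_le, Set.singleton_subset_iff]
      exact mem_Wsub.mpr rfl
  refine ⟨⟨?_, ?_⟩, le_sup_left, hWinf⟩
  · have := Submodule.finrank_sup_add_finrank_inf_eq f₀.graph sp
    rw [hinf, graph_finrank, finrank_span_singleton hwne] at this
    simpa using this
  · rw [hWinf, finrank_span_singleton hwne]

end Aux2


/-- The geometries `X(n,t,q)` and `T_n*(S)` are isomorphic. -/
theorem stmt5 (p h n t : ℕ) (hp : p.Prime) (hh : 0 < h) (hn : 1 ≤ n) (ht : 2 ≤ t)
    (q : ℕ) (hq : q = p ^ h)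
    (K L : Type) [Field K] [Field L] [Algebra K L] [Fintype K] [Fintype L]
    (hK : Fintype.card K = q) (hL : Fintype.card L = q ^ t)
    (hdeg : Module.finrank K L = t) :
    ∃ Φ : XPoint K n t ≃ (Fin (n + 1) → L),
      (∀ l : Submodule K ((Fin t → K) × (Fin (n + 1) → K)), IsXLine K n t l →
        IsTLine n K L (⇑Φ '' {U : XPoint K n t | U.1 ≤ l})) ∧
      (∀ s : Set (Fin (n + 1) → L), IsTLine n K L s →
        ∃! l : Submodule K ((Fin t → K) × (Fin (n + 1) → K)),
          IsXLine K n t l ∧ ⇑Φ '' {U : XPoint K n t | U.1 ≤ l} = s) := by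
  classical
  have hfinL : FiniteDimensional K L := Module.Finite.of_finite
  have hψdim : Module.finrank K ((Fin t → K) →ₗ[K] K) = Module.finrank K L := by
    rw [Module.finrank_linearMap, Module.finrank_pi, Module.finrank_self,
      Fintype.card_fin, hdeg, mul_one]
  let ψ : ((Fin t → K) →ₗ[K] K) ≃ₗ[K] L := LinearEquiv.ofFinrankEq _ _ hψdim
  let χ : ((Fin t → K) →ₗ[K] (Fin (n + 1) → K)) ≃ (Fin (n + 1) → L) :=
    { toFun := fun f i => ψ ((LinearMap.proj i).comp f)
      invFun := fun g => LinearMap.pi fun i => ψ.symm (g i)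
      left_inv := fun f => by
        refine LinearMap.ext fun x => funext fun i => ?_
        simp [LinearMap.pi_apply]
      right_inv := fun g => by
        funext i
        simp [LinearMap.proj_pi] }
  have hbij : Function.Bijective (fun f : ((Fin t → K) →ₗ[K] (Fin (n + 1) → K)) =>
      (⟨f.graph, graph_finrank f, graph_inf_W f⟩ : XPoint K n t)) := by
    constructor
    · intro f g hfg
      exact graph_injective' (congrArg Subtype.val hfg)
    · rintro ⟨U, h1, h2⟩
      obtain ⟨f, hf⟩ := exists_graph h1 h2
      exact ⟨f, Subtype.ext hf⟩
  let Γ : ((Fin t → K) →ₗ[K] (Fin (n + 1) → K)) ≃ XPoint K n t := Equiv.ofBijective _ hbij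
  let Φ : XPoint K n t ≃ (Fin (n + 1) → L) := Γ.symm.trans χ
  have hΦΓ : ∀ f, Φ (Γ f) = χ f := fun f => by
    simp only [Φ, Equiv.trans_apply, Equiv.symm_apply_apply]
  have hadd : ∀ (f₀ : (Fin t → K) →ₗ[K] (Fin (n + 1) → K)) (φ : (Fin t → K) →ₗ[K] K)
      (w : Fin (n + 1) → K),
      χ (f₀ + φ.smulRight w) = χ f₀ + ψ φ • fun i => algebraMap K L (w i) := by
    intro f₀ φ w
    funext i
    have hcomp : (LinearMap.proj i).comp (f₀ + φ.smulRight w) =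
        (LinearMap.proj i).comp f₀ + (w i) • φ := by
      refine LinearMap.ext fun x => ?_
      simp [LinearMap.smulRight_apply, mul_comm]
    show ψ ((LinearMap.proj i).comp (f₀ + φ.smulRight w)) = _
    rw [hcomp, map_add, map_smul]
    simp only [Pi.add_apply, Pi.smul_apply, smul_eq_mul, Algebra.smul_def]
    rw [mul_comm]
    rfl
  have himg : ∀ (l : Submodule K ((Fin t → K) × (Fin (n + 1) → K)))
      (f₀ : (Fin t → K) →ₗ[K] (Fin (n + 1) → K)) (w : Fin (n + 1) → K),
      f₀.graph ≤ l → w ≠ 0 →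
      l ⊓ Wsub K n t = Submodule.span K {((0, w) : (Fin t → K) × (Fin (n + 1) → K))} →
      ⇑Φ '' {U : XPoint K n t | U.1 ≤ l} =
        {y | ∃ lam : L, y = χ f₀ + lam • fun i => algebraMap K L (w i)} := by
    intro l f₀ w hf₀ hw hlW
    ext y
    simp only [Set.mem_image, Set.mem_setOf_eq]
    constructor
    · rintro ⟨U, hUl, rfl⟩
      obtain ⟨φ, hφ⟩ := (points_le_line hf₀ hw hlW U.1).mp ⟨U.2, hUl⟩
      have hU : U = Γ (f₀ + φ.smulRight w) := Subtype.ext hφ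
      rw [hU, hΦΓ, hadd]
      exact ⟨ψ φ, rfl⟩
    · rintro ⟨lam, rfl⟩
      refine ⟨Γ (f₀ + (ψ.symm lam).smulRight w), ?_, ?_⟩
      · exact ((points_le_line hf₀ hw hlW _).mpr ⟨ψ.symm lam, rfl⟩).2
      · rw [hΦΓ, hadd, ψ.apply_symm_apply]
  refine ⟨Φ, ?_, ?_⟩
  · intro l hl
    obtain ⟨f₀, w, hf₀, hw, hlW⟩ := exists_basepoint hl
    exact ⟨χ f₀, w, hw, himg l f₀ w hf₀ hw hlW⟩
  · intro s hs
    obtain ⟨x₀, v, hv, rfl⟩ := hs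
    set f₀ : (Fin t → K) →ₗ[K] (Fin (n + 1) → K) := LinearMap.pi fun i => ψ.symm (x₀ i)
      with hf₀def
    have hχf₀ : χ f₀ = x₀ := χ.right_inv x₀
    obtain ⟨hXl, hle, hlW⟩ := construct_line (n := n) f₀ hv
    set l := f₀.graph ⊔ Submodule.span K {((0, v) : (Fin t → K) × (Fin (n + 1) → K))}
      with hldef
    refine ⟨l, ⟨hXl, ?_⟩, ?_⟩
    · rw [himg l f₀ v hle hv hlW, hχf₀]
    · rintro l' ⟨hl', himg'⟩
      have hset : {U : XPoint K n t | U.1 ≤ l'} = {U : XPoint K n t | U.1 ≤ l} := by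
        have h1 : ⇑Φ '' {U : XPoint K n t | U.1 ≤ l'} = ⇑Φ '' {U : XPoint K n t | U.1 ≤ l} := by
          rw [himg', himg l f₀ v hle hv hlW, hχf₀]
        exact Set.image_injective.mpr Φ.injective h1
      have hg0 : f₀.graph ≤ l' := by
        have hmem : Γ f₀ ∈ {U : XPoint K n t | U.1 ≤ l} := hle
        rw [← hset] at hmem
        exact hmem
      have ht0 : 0 < t := by omega
      set φ1 : (Fin t → K) →ₗ[K] K := LinearMap.proj ⟨0, ht0⟩ with hφ1
      have hg1 : (f₀ + φ1.smulRight v).graph ≤ l' := by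
        have hp := (points_le_line hle hv hlW _).mpr ⟨φ1, rfl⟩
        have hmem : Γ (f₀ + φ1.smulRight v) ∈ {U : XPoint K n t | U.1 ≤ l} := hp.2
        rw [← hset] at hmem
        exact hmem
      set x1 : Fin t → K := Pi.single ⟨0, ht0⟩ 1 with hx1
      have hφx : φ1 x1 = 1 := by simp [hφ1, hx1]
      have hm1 : (x1, f₀ x1 + v) ∈ l' := by
        have hmg : (x1, (f₀ + φ1.smulRight v) x1) ∈ (f₀ + φ1.smulRight v).graph :=
          ((f₀ + φ1.smulRight v).mem_graph_iff _).mpr rfl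
        have h2 := hg1 hmg
        simpa [hφx] using h2
      have hm2 : (x1, f₀ x1) ∈ l' := hg0 ((f₀.mem_graph_iff _).mpr rfl)
      have hv' : ((0, v) : (Fin t → K) × (Fin (n + 1) → K)) ∈ l' := by
        have := l'.sub_mem hm1 hm2
        simpa using this
      have hll' : l ≤ l' := sup_le hg0
        (by rw [Submodule.span_le, Set.singleton_subset_iff]; exact hv')
      exact (Submodule.eq_of_le_of_finrank_eq hll' (by rw [hXl.1, hl'.1])).symm
end

section
/- Let K be a field, t ≥ 1, n ≥ 1 integers, L a field extension of K of degree t, and E : K^t → L any K-linear bijection. Define φ from the (n+1)×t matrices over K to L^{n+1} by φ(A)_i = E(A_i), where A_i is the i-th row of A. Then φ is an additive bijection, and for every (n+1)×t matrix A₀ and every b ∈ K^{n+1}, the image under φ of the coset A₀ + L_b = { A₀ + vecMulVec b a : a ∈ K^t } equals the set { φ(A₀) + λ·b̂ : λ ∈ L }, where b̂ ∈ L^{n+1} has coordinates b̂_i = algebraMap K L (b_i). In particular φ maps every line of the coset geometry 𝓜 onto a line of the linear representation of the subgeometry S, and conversely. -/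
/-- Blowing up rows via a `K`-linear bijection `E : K^t → L` gives an additive
bijection from `(n+1) × t` matrices over `K` to `L^{n+1}` mapping the lines of the coset
geometry `𝓜` onto the lines of the linear representation `T_n*(S)`. -/
theorem stmt6 (n t : ℕ) (hn : 1 ≤ n) (ht : 1 ≤ t)
    (K L : Type) [Field K] [Field L] [Algebra K L]
    (hdeg : Module.finrank K L = t)
    (E : (Fin t → K) ≃ₗ[K] L)
    (φ : Matrix (Fin (n + 1)) (Fin t) K → (Fin (n + 1) → L))
    (hφ : ∀ (A : Matrix (Fin (n + 1)) (Fin t) K) (i : Fin (n + 1)), φ A i = E (A i)) :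
    Function.Bijective φ ∧
    (∀ A B : Matrix (Fin (n + 1)) (Fin t) K, φ (A + B) = φ A + φ B) ∧
    ∀ (A₀ : Matrix (Fin (n + 1)) (Fin t) K) (b : Fin (n + 1) → K),
      φ '' {A | ∃ a : Fin t → K, A = A₀ + Matrix.vecMulVec b a}
        = {y | ∃ lam : L, y = φ A₀ + lam • fun i => algebraMap K L (b i)} := by
  refine ⟨⟨?_, ?_⟩, ?_, ?_⟩
  · intro A B h
    ext i j
    have : E (A i) = E (B i) := by rw [← hφ A i, ← hφ B i, h]
    exact congrFun (E.injective this) j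
  · intro y
    refine ⟨fun i => E.symm (y i), ?_⟩
    ext i
    rw [hφ (fun i => E.symm (y i)) i]
    simp
  · intro A B
    ext i
    simp only [hφ, Pi.add_apply, Matrix.add_apply]
    show E (A i + B i) = E (A i) + E (B i)
    rw [map_add]
  · intro A₀ b
    ext y
    constructor
    · rintro ⟨A, ⟨a, rfl⟩, rfl⟩
      refine ⟨E a, ?_⟩
      ext i
      simp only [hφ, Pi.add_apply, Pi.smul_apply, Matrix.add_apply, Matrix.vecMulVec_apply]
      show E (A₀ i + b i • a) = E (A₀ i) + E a • algebraMap K L (b i)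
      rw [map_add, map_smul, Algebra.smul_def, smul_eq_mul, mul_comm]
    · rintro ⟨lam, rfl⟩
      refine ⟨A₀ + Matrix.vecMulVec b (E.symm lam), ⟨E.symm lam, rfl⟩, ?_⟩
      ext i
      simp only [hφ, Pi.add_apply, Pi.smul_apply, Matrix.add_apply, Matrix.vecMulVec_apply]
      show E (A₀ i + b i • E.symm lam) = E (A₀ i) + lam • algebraMap K L (b i)
      rw [map_add, map_smul, Algebra.smul_def, smul_eq_mul, mul_comm, E.apply_symm_apply]
end

section
/- Let σ be a field automorphism of K, let B ∈ GL_{n+1}(K) and C ∈ GL_t(K) be invertible matrices, and let A₀ be an (n+1)×t matrix over K. Then the map α defined on (n+1)×t matrices by α(P) = σ(B·P·C + A₀) (σ applied entrywise) is a bijection, and for every matrix P₀ and every b ∈ K^{n+1}, the image under α of the coset P₀ + L_b equals the coset α(P₀) + L_{b′}, where b′ ∈ K^{n+1} is obtained by applying σ entrywise to the vector B·b. In particular α is an automorphism of the coset geometry 𝓜. -/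
open Matrix

lemma aux_mul_vecMulVec {m m' p : Type*} [Fintype m] {K : Type} [Field K]
    (B : Matrix m' m K) (b : m → K) (a : p → K) :
    B * vecMulVec b a = vecMulVec (B.mulVec b) a := by
  ext i j
  simp [Matrix.mul_apply, vecMulVec_apply, Matrix.mulVec, dotProduct,
    Finset.sum_mul, mul_assoc]

lemma aux_vecMulVec_mul {m p p' : Type*} [Fintype p] {K : Type} [Field K]
    (v : m → K) (a : p → K) (C : Matrix p p' K) :
    vecMulVec v a * C = vecMulVec v (Matrix.vecMul a C) := by
  ext i j
  simp [Matrix.mul_apply, vecMulVec_apply, Matrix.vecMul, dotProduct,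
    Finset.mul_sum, mul_assoc]

lemma aux_map_vecMulVec {m p : Type*} {K : Type} [Field K] (σ : K ≃+* K)
    (v : m → K) (a : p → K) :
    (vecMulVec v a).map σ = vecMulVec (fun i => σ (v i)) (fun j => σ (a j)) := by
  ext i j
  simp [vecMulVec_apply, _root_.map_mul]

/-- The map `P ↦ σ(B·P·C + A₀)` is a bijection of the `(n+1) × t` matrices over
`K` mapping each coset `P₀ + L_b` onto the coset `α(P₀) + L_{b′}` with `b′ = σ(B·b)`
(entrywise); in particular it is an automorphism of the coset geometry `𝓜`. -/
theorem stmt7 (n t : ℕ) (hn : 1 ≤ n) (ht : 1 ≤ t)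
    (K : Type) [Field K]
    (σ : K ≃+* K)
    (B : Matrix.GeneralLinearGroup (Fin (n + 1)) K)
    (C : Matrix.GeneralLinearGroup (Fin t) K)
    (A₀ : Matrix (Fin (n + 1)) (Fin t) K)
    (α : Matrix (Fin (n + 1)) (Fin t) K → Matrix (Fin (n + 1)) (Fin t) K)
    (hα : ∀ P, α P = ((B : Matrix (Fin (n + 1)) (Fin (n + 1)) K) * P *
      (C : Matrix (Fin t) (Fin t) K) + A₀).map σ) :
    Function.Bijective α ∧
    ∀ (P₀ : Matrix (Fin (n + 1)) (Fin t) K) (b : Fin (n + 1) → K),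
      (α '' {P | ∃ a : Fin t → K, P = P₀ + Matrix.vecMulVec b a}
        = {P | ∃ a : Fin t → K, P = α P₀ + Matrix.vecMulVec
            (fun i => σ ((B : Matrix (Fin (n + 1)) (Fin (n + 1)) K).mulVec b i)) a}) ∧
      (b ≠ 0 →
        (fun i => σ ((B : Matrix (Fin (n + 1)) (Fin (n + 1)) K).mulVec b i)) ≠ 0) := by
  have hBB : ((B⁻¹ : Matrix.GeneralLinearGroup (Fin (n + 1)) K) :
      Matrix (Fin (n + 1)) (Fin (n + 1)) K) * (B : Matrix (Fin (n + 1)) (Fin (n + 1)) K)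
      = 1 := B.inv_mul
  have hBB' : (B : Matrix (Fin (n + 1)) (Fin (n + 1)) K) *
      ((B⁻¹ : Matrix.GeneralLinearGroup (Fin (n + 1)) K) :
      Matrix (Fin (n + 1)) (Fin (n + 1)) K) = 1 := B.mul_inv
  have hCC : ((C⁻¹ : Matrix.GeneralLinearGroup (Fin t) K) : Matrix (Fin t) (Fin t) K) *
      (C : Matrix (Fin t) (Fin t) K) = 1 := C.inv_mul
  have hCC' : (C : Matrix (Fin t) (Fin t) K) *
      ((C⁻¹ : Matrix.GeneralLinearGroup (Fin t) K) : Matrix (Fin t) (Fin t) K) = 1 :=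
    C.mul_inv
  have hmapmap : ∀ (X : Matrix (Fin (n + 1)) (Fin t) K), (X.map σ).map σ.symm = X := by
    intro X; ext i j; simp
  have hmapmap' : ∀ (X : Matrix (Fin (n + 1)) (Fin t) K), (X.map σ.symm).map σ = X := by
    intro X; ext i j; simp
  have sandwich : ∀ X : Matrix (Fin (n + 1)) (Fin t) K,
      (B : Matrix (Fin (n + 1)) (Fin (n + 1)) K) *
        (((B⁻¹ : Matrix.GeneralLinearGroup (Fin (n + 1)) K) :
          Matrix (Fin (n + 1)) (Fin (n + 1)) K) * X *
          ((C⁻¹ : Matrix.GeneralLinearGroup (Fin t) K) : Matrix (Fin t) (Fin t) K)) *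
        (C : Matrix (Fin t) (Fin t) K) = X := by
    intro X
    rw [Matrix.mul_assoc _ X, ← Matrix.mul_assoc (B : Matrix (Fin (n + 1)) (Fin (n + 1)) K),
      hBB', Matrix.one_mul, Matrix.mul_assoc X, hCC, Matrix.mul_one]
  have sandwich' : ∀ X : Matrix (Fin (n + 1)) (Fin t) K,
      ((B⁻¹ : Matrix.GeneralLinearGroup (Fin (n + 1)) K) :
        Matrix (Fin (n + 1)) (Fin (n + 1)) K) *
        ((B : Matrix (Fin (n + 1)) (Fin (n + 1)) K) * X * (C : Matrix (Fin t) (Fin t) K)) *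
        ((C⁻¹ : Matrix.GeneralLinearGroup (Fin t) K) : Matrix (Fin t) (Fin t) K) = X := by
    intro X
    rw [Matrix.mul_assoc _ X, ← Matrix.mul_assoc
      ((B⁻¹ : Matrix.GeneralLinearGroup (Fin (n + 1)) K) :
        Matrix (Fin (n + 1)) (Fin (n + 1)) K),
      hBB, Matrix.one_mul, Matrix.mul_assoc X, hCC', Matrix.mul_one]
  constructor
  · rw [Function.bijective_iff_has_inverse]
    refine ⟨fun Q => ((B⁻¹ : Matrix.GeneralLinearGroup (Fin (n + 1)) K) :
        Matrix (Fin (n + 1)) (Fin (n + 1)) K) * (Q.map σ.symm - A₀) *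
        ((C⁻¹ : Matrix.GeneralLinearGroup (Fin t) K) : Matrix (Fin t) (Fin t) K),
        ?_, ?_⟩
    · intro P
      simp only [hα, hmapmap, add_sub_cancel_right]
      exact sandwich' P
    · intro Q
      simp only [hα, sandwich, sub_add_cancel, hmapmap']
  · intro P₀ b
    constructor
    · ext Q
      simp only [Set.mem_image, Set.mem_setOf_eq]
      have key : ∀ a : Fin t → K, α (P₀ + vecMulVec b a) = α P₀ +
          vecMulVec (fun i => σ ((B : Matrix (Fin (n + 1)) (Fin (n + 1)) K).mulVec b i))
            (fun j => σ (Matrix.vecMul a (C : Matrix (Fin t) (Fin t) K) j)) := by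
        intro a
        rw [hα, hα]
        have h1 : (B : Matrix (Fin (n + 1)) (Fin (n + 1)) K) * (P₀ + vecMulVec b a) *
            (C : Matrix (Fin t) (Fin t) K) + A₀
            = ((B : Matrix (Fin (n + 1)) (Fin (n + 1)) K) * P₀ *
              (C : Matrix (Fin t) (Fin t) K) + A₀) +
              vecMulVec ((B : Matrix (Fin (n + 1)) (Fin (n + 1)) K).mulVec b)
                (Matrix.vecMul a (C : Matrix (Fin t) (Fin t) K)) := by
          rw [Matrix.mul_add, Matrix.add_mul, aux_mul_vecMulVec, aux_vecMulVec_mul]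
          abel
        rw [h1]
        ext i j
        simp [Matrix.map_apply, Matrix.add_apply, vecMulVec_apply, _root_.map_mul,
          _root_.map_add]
      constructor
      · rintro ⟨P, ⟨a, rfl⟩, rfl⟩
        exact ⟨fun j => σ (Matrix.vecMul a (C : Matrix (Fin t) (Fin t) K) j), key a⟩
      · rintro ⟨a', rfl⟩
        refine ⟨P₀ + vecMulVec b (Matrix.vecMul (fun j => σ.symm (a' j))
          ((C⁻¹ : Matrix.GeneralLinearGroup (Fin t) K) : Matrix (Fin t) (Fin t) K)),
          ⟨_, rfl⟩, ?_⟩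
        rw [key]
        congr 1
        have h2 : Matrix.vecMul (Matrix.vecMul (fun j => σ.symm (a' j))
            ((C⁻¹ : Matrix.GeneralLinearGroup (Fin t) K) : Matrix (Fin t) (Fin t) K))
            (C : Matrix (Fin t) (Fin t) K) = fun j => σ.symm (a' j) := by
          rw [Matrix.vecMul_vecMul, hCC, Matrix.vecMul_one]
        rw [h2]
        funext j
        simp
    · intro hb hcontra
      apply hb
      have h0 : (B : Matrix (Fin (n + 1)) (Fin (n + 1)) K).mulVec b = 0 := by
        funext i
        have := congrFun hcontra i
        simpa using σ.injective (by simpa using this)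
      have h1 : ((B⁻¹ : Matrix.GeneralLinearGroup (Fin (n + 1)) K) :
          Matrix (Fin (n + 1)) (Fin (n + 1)) K).mulVec
          ((B : Matrix (Fin (n + 1)) (Fin (n + 1)) K).mulVec b) = 0 := by
        rw [h0, Matrix.mulVec_zero]
      rwa [Matrix.mulVec_mulVec, hBB, Matrix.one_mulVec] at h1
end

section
/- Let K be a field, n ≥ 0 and t ≥ 1 integers, σ a field automorphism of K, B an invertible (n+1)×(n+1) matrix, C an invertible t×t matrix, and A₀ an (n+1)×t matrix over K. If σ(B·P·C + A₀) = P (σ applied entrywise) for every (n+1)×t matrix P, then A₀ = 0, σ is the identity automorphism, and there exists a nonzero scalar λ ∈ K with B = λ·I_{n+1} and C = λ^{-1}·I_t. (This identifies the kernel of the action of the group 𝒜 on the points of the coset geometry as K = {(0, λI_{n+1}, λ^{-1}I_t, 0) : λ ∈ K*}.) -/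
/-- If `σ(B·P·C + A₀) = P` for all `(n+1) × t` matrices `P`, then `A₀ = 0`,
`σ` is the identity, and `B = λ·I`, `C = λ⁻¹·I` for some nonzero scalar `λ`. -/
theorem stmt8 (n t : ℕ) (ht : 1 ≤ t)
    (K : Type) [Field K]
    (σ : K ≃+* K)
    (B : Matrix (Fin (n + 1)) (Fin (n + 1)) K) (hB : IsUnit B)
    (C : Matrix (Fin t) (Fin t) K) (hC : IsUnit C)
    (A₀ : Matrix (Fin (n + 1)) (Fin t) K)
    (hker : ∀ P : Matrix (Fin (n + 1)) (Fin t) K, (B * P * C + A₀).map σ = P) :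
    A₀ = 0 ∧ σ = RingEquiv.refl K ∧
      ∃ lam : K, lam ≠ 0 ∧ B = lam • (1 : Matrix (Fin (n + 1)) (Fin (n + 1)) K) ∧
        C = lam⁻¹ • (1 : Matrix (Fin t) (Fin t) K) := by
  have hA0 : A₀ = 0 := by
    have h0 := hker 0
    ext i j
    have := congrFun (congrFun h0 i) j
    simp [Matrix.map_apply] at this
    simpa using σ.injective (by simpa using this)
  subst hA0
  -- key entry identity
  have key : ∀ (x : K) (i k : Fin (n + 1)) (j l : Fin t),
      σ (B k i * x * C j l) = Matrix.single i j x k l := by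
    intro x i k j l
    have h := congrFun (congrFun (hker (Matrix.single i j x)) k) l
    rw [add_zero] at h
    have hent : (B * Matrix.single i j x * C) k l = B k i * x * C j l := by
      simp [Matrix.mul_apply, Matrix.single, ite_and, Finset.sum_ite_eq, ite_mul,
        Finset.sum_ite_eq']
    rw [Matrix.map_apply, hent] at h
    exact h
  set j0 : Fin t := ⟨0, ht⟩ with hj0
  set u : K := B 0 0 with hu'
  set v : K := C j0 j0 with hv'
  have keyd : ∀ x : K, σ (u * x * v) = x := by
    intro x
    have h := key x 0 0 j0 j0
    rwa [Matrix.single_apply_same] at h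
  have huv : u * v = 1 := by
    have h := keyd 1
    rw [mul_one] at h
    exact σ.injective (by simpa using h)
  have hσ : ∀ x : K, σ x = x := by
    intro x
    calc σ x = σ (u * x * v) := by rw [mul_comm u x, mul_assoc, huv, mul_one]
    _ = x := keyd x
  have hu : u ≠ 0 := left_ne_zero_of_mul_eq_one huv
  have hv : v ≠ 0 := right_ne_zero_of_mul_eq_one huv
  refine ⟨rfl, by ext x; exact hσ x, u, hu, ?_, ?_⟩
  · ext k i
    have h := key 1 i k j0 j0
    rw [hσ, mul_one] at h
    simp only [Matrix.smul_apply, Matrix.one_apply, smul_eq_mul]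
    by_cases hki : k = i
    · subst hki
      rw [Matrix.single_apply_same] at h
      rw [if_pos rfl, mul_one]
      exact mul_right_cancel₀ hv (by rw [h, huv])
    · have h0 : B k i * v = 0 := by
        rw [h]; exact Matrix.single_apply_of_ne _ _ _ _ _ (by tauto)
      rw [if_neg hki, mul_zero]
      rcases mul_eq_zero.mp h0 with h1 | h1
      · exact h1
      · exact absurd h1 hv
  · ext j l
    have h := key 1 0 0 j l
    rw [hσ, mul_one] at h
    simp only [Matrix.smul_apply, Matrix.one_apply, smul_eq_mul]
    by_cases hjl : j = l
    · subst hjl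
      rw [Matrix.single_apply_same] at h
      rw [if_pos rfl, mul_one]
      rw [mul_comm] at h
      field_simp
      linear_combination h
    · have h0 : u * C j l = 0 := by
        rw [hu', h]; exact Matrix.single_apply_of_ne _ _ _ _ _ (by tauto)
      rw [if_neg hjl, mul_zero]
      rcases mul_eq_zero.mp h0 with h1 | h1
      · exact absurd h1 hu
      · exact h1
end

section
/- Let K be a field, m ≥ 1, t ≥ 1 integers, and b, c ∈ K^m nonzero vectors. Then the sets L_b = { vecMulVec b a : a ∈ K^t } and L_c = { vecMulVec c a : a ∈ K^t } are equal if and only if there exists a nonzero scalar λ ∈ K with c = λ·b. Consequently, when K has q elements, the number of distinct subgroups L_b with b nonzero is (q^m − 1)/(q − 1). -/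
namespace Stmt14Aux

variable {m t : ℕ} {K : Type} [Field K]

def L (m t : ℕ) (K : Type) [Field K] (d : Fin m → K) : Set (Matrix (Fin m) (Fin t) K) :=
  {A | ∃ a : Fin t → K, A = Matrix.vecMulVec d a}

lemma L_smul (d : Fin m → K) {lam : K} (hlam : lam ≠ 0) :
    L m t K (lam • d) = L m t K d := by
  ext A
  constructor
  · rintro ⟨a, rfl⟩
    refine ⟨lam • a, ?_⟩
    ext i j
    simp [Matrix.vecMulVec_apply]
    ring
  · rintro ⟨a, rfl⟩
    refine ⟨lam⁻¹ • a, ?_⟩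
    ext i j
    simp only [Matrix.vecMulVec_apply, Pi.smul_apply, smul_eq_mul]
    rw [mul_mul_mul_comm, mul_inv_cancel₀ hlam, one_mul]

lemma L_eq_iff (ht : 1 ≤ t) {b c : Fin m → K} (hb : b ≠ 0) (hc : c ≠ 0) :
    L m t K b = L m t K c ↔ ∃ lam : K, lam ≠ 0 ∧ c = lam • b := by
  constructor
  · intro h
    have hmem : Matrix.vecMulVec c (fun _ => 1) ∈ L m t K b :=
      h ▸ ⟨fun _ => 1, rfl⟩
    obtain ⟨a, ha⟩ := hmem
    set j0 : Fin t := ⟨0, ht⟩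
    refine ⟨a j0, ?_, funext fun i => ?_⟩
    · intro h0
      obtain ⟨i1, hi1⟩ := Function.ne_iff.mp hc
      have := congrFun (congrFun ha i1) j0
      simp [Matrix.vecMulVec_apply, h0] at this
      exact hi1 this
    · have := congrFun (congrFun ha i) j0
      simp [Matrix.vecMulVec_apply] at this
      simp [this, mul_comm]
  · rintro ⟨lam, hlam, rfl⟩
    exact (L_smul b hlam).symm

end Stmt14Aux

/-- For nonzero `b, c ∈ K^m`, `L_b = L_c` iff `c` is a nonzero scalar multiple
of `b`; consequently, when `|K| = q`, there are exactly `(q^m − 1)/(q − 1)` distinct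
subgroups `L_b`. -/
theorem stmt14 (m t q : ℕ) (hm : 1 ≤ m) (ht : 1 ≤ t)
    (K : Type) [Field K] [Fintype K] (hq : Fintype.card K = q)
    (b c : Fin m → K) (hb : b ≠ 0) (hc : c ≠ 0) :
    ({A : Matrix (Fin m) (Fin t) K | ∃ a : Fin t → K, A = Matrix.vecMulVec b a}
        = {A : Matrix (Fin m) (Fin t) K | ∃ a : Fin t → K, A = Matrix.vecMulVec c a}
      ↔ ∃ lam : K, lam ≠ 0 ∧ c = lam • b) ∧
    Nat.card {S : Set (Matrix (Fin m) (Fin t) K) //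
        ∃ d : Fin m → K, d ≠ 0 ∧ S = {A | ∃ a : Fin t → K, A = Matrix.vecMulVec d a}}
      = (q ^ m - 1) / (q - 1) := by
  classical
  constructor
  · exact Stmt14Aux.L_eq_iff ht hb hc
  · -- counting part
    set N : Type := {S : Set (Matrix (Fin m) (Fin t) K) //
        ∃ d : Fin m → K, d ≠ 0 ∧ S = {A | ∃ a : Fin t → K, A = Matrix.vecMulVec d a}}
    have hL : ∀ d : Fin m → K,
        {A : Matrix (Fin m) (Fin t) K | ∃ a : Fin t → K, A = Matrix.vecMulVec d a}
          = Stmt14Aux.L m t K d := fun _ => rfl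
    -- the map from nonzero vectors to N
    let g : {d : Fin m → K // d ≠ 0} → N := fun d => ⟨Stmt14Aux.L m t K d.1, d.1, d.2, rfl⟩
    have hFin : Finite N := by
      infer_instance
    have : Fintype N := Fintype.ofFinite N
    -- card of nonzero vectors
    have hcardvec : Fintype.card {d : Fin m → K // d ≠ 0} = q ^ m - 1 := by
      have h1 : Fintype.card {d : Fin m → K // d = 0} = 1 := Fintype.card_subtype_eq 0
      have := Fintype.card_subtype_compl (fun d : Fin m → K => d = 0)
      rw [h1] at this
      simpa [Fintype.card_fun, hq] using this
    -- card of each fiber is q - 1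
    have hfiber : ∀ s : N, Fintype.card {d : {d : Fin m → K // d ≠ 0} // g d = s} = q - 1 := by
      intro s
      obtain ⟨S, d0, hd0, hS⟩ := s
      -- bijection with nonzero scalars
      let f : {lam : K // lam ≠ 0} → {d : {d : Fin m → K // d ≠ 0} // g d = ⟨S, d0, hd0, hS⟩} :=
        fun lam => ⟨⟨lam.1 • d0, smul_ne_zero lam.2 hd0⟩, by
          apply Subtype.ext
          show Stmt14Aux.L m t K (lam.1 • d0) = S
          rw [Stmt14Aux.L_smul d0 lam.2, hS]; rfl⟩
      have hfbij : Function.Bijective f := by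
        constructor
        · intro x y hxy
          obtain ⟨i0, hi0⟩ := Function.ne_iff.mp hd0
          have : x.1 • d0 = y.1 • d0 := congrArg (fun z => (z.1 : {d : Fin m → K // d ≠ 0}).1) hxy
          have := congrFun this i0
          simp only [Pi.smul_apply, smul_eq_mul] at this
          exact Subtype.ext (mul_right_cancel₀ hi0 this)
        · rintro ⟨⟨d, hd⟩, hgd⟩
          have hLd : Stmt14Aux.L m t K d = Stmt14Aux.L m t K d0 := by
            have := congrArg Subtype.val hgd
            exact this.trans hS
          obtain ⟨lam, hlam, hdd⟩ := (Stmt14Aux.L_eq_iff ht hd hd0).mp hLd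
          refine ⟨⟨lam⁻¹, inv_ne_zero hlam⟩, ?_⟩
          apply Subtype.ext
          apply Subtype.ext
          show lam⁻¹ • d0 = d
          rw [hdd, smul_smul, inv_mul_cancel₀ hlam, one_smul]
      have hcardlam : Fintype.card {lam : K // lam ≠ 0} = q - 1 := by
        rw [← Fintype.card_congr (unitsEquivNeZero (G₀ := K)), Fintype.card_units, hq]
      rw [← hcardlam]
      exact (Fintype.card_of_bijective hfbij).symm
    -- g is surjective
    have hgsurj : Function.Surjective g := by
      rintro ⟨S, d, hd, hS⟩
      exact ⟨⟨d, hd⟩, Subtype.ext hS.symm⟩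
    -- total count via sigma of fibers
    have hsigma : Fintype.card {d : Fin m → K // d ≠ 0} = Fintype.card N * (q - 1) := by
      rw [← Fintype.card_congr (Equiv.sigmaFiberEquiv g), Fintype.card_sigma]
      simp [hfiber, Finset.sum_const, mul_comm]
    have hq2 : 2 ≤ q := by
      rw [← hq]
      exact Fintype.one_lt_card
    have hmain : q ^ m - 1 = Fintype.card N * (q - 1) := by
      rw [← hcardvec]; exact hsigma
    rw [Nat.card_eq_fintype_card]
    show Fintype.card N = (q ^ m - 1) / (q - 1)
    rw [hmain, Nat.mul_div_cancel _ (by omega)]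
end

section
/- Let K be a finite field, t ≥ 1 an integer, and M a t×t matrix over K whose minimal polynomial over K is irreducible of degree t. Then for any two nonzero vectors x, y ∈ K^t there exists a unique matrix N in the subalgebra H = K[M] generated by M such that N·x = y. In particular, the nonzero elements of H act sharply transitively on the nonzero vectors of K^t. -/
open Polynomial

/-- If the minimal polynomial of a `t × t` matrix `M` over a finite field `K`
is irreducible of degree `t`, then for any two nonzero vectors `x, y ∈ K^t` there is a
unique `N ∈ K[M]` with `N·x = y`. -/
theorem stmt16 (t : ℕ) (ht : 1 ≤ t)
    (K : Type) [Field K] [Fintype K]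
    (M : Matrix (Fin t) (Fin t) K)
    (hirr : Irreducible (minpoly K M))
    (hdeg : (minpoly K M).natDegree = t)
    (x y : Fin t → K) (hx : x ≠ 0) (hy : y ≠ 0) :
    ∃! N : Matrix (Fin t) (Fin t) K, N ∈ Algebra.adjoin K {M} ∧ N.mulVec x = y := by
  set p := minpoly K M with hp
  have hp0 : p ≠ 0 := hirr.ne_zero
  -- any nonzero aeval M r is a unit
  have key : ∀ r : K[X], Polynomial.aeval M r ≠ 0 → IsUnit (Polynomial.aeval M r) := by
    intro r hr
    have hnd : ¬ p ∣ r := by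
      rintro ⟨s, rfl⟩
      exact hr (by simp [map_mul, ← hp, (show Polynomial.aeval M p = 0 from minpoly.aeval K M)])
    obtain ⟨a, b, hab⟩ := hirr.coprime_iff_not_dvd.2 hnd
    have h1 : Polynomial.aeval M b * Polynomial.aeval M r = 1 := by
      have := congrArg (Polynomial.aeval M) hab
      simpa [map_add, map_mul, ← hp, (show Polynomial.aeval M p = 0 from minpoly.aeval K M)] using this
    exact ⟨⟨_, _, mul_eq_one_comm.mp h1, h1⟩, rfl⟩
  -- elements of the adjoin killing x are zero
  have hzero : ∀ D : Matrix (Fin t) (Fin t) K,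
      D ∈ Algebra.adjoin K {M} → D.mulVec x = 0 → D = 0 := by
    intro D hD h0
    rw [Algebra.adjoin_singleton_eq_range_aeval, AlgHom.mem_range] at hD
    obtain ⟨r, rfl⟩ := hD
    by_contra hD0
    obtain ⟨u, hu⟩ := key r hD0
    apply hx
    have h1 : (↑u⁻¹ : Matrix (Fin t) (Fin t) K).mulVec ((Polynomial.aeval M r).mulVec x) = x := by
      rw [Matrix.mulVec_mulVec, ← hu, Units.inv_mul, Matrix.one_mulVec]
    rw [h0, Matrix.mulVec_zero] at h1
    exact h1.symm
  -- the polynomial built from coefficients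
  set q : (Fin t → K) → K[X] := fun c => ∑ i : Fin t, Polynomial.C (c i) * Polynomial.X ^ (i : ℕ)
    with hq
  have hqdeg : ∀ c, (q c).degree < (t : ℕ) := by
    intro c
    refine lt_of_le_of_lt (Polynomial.degree_sum_le _ _) ?_
    rw [Finset.sup_lt_iff (by exact_mod_cast WithBot.bot_lt_coe t)]
    intro i _
    exact lt_of_le_of_lt (Polynomial.degree_C_mul_X_pow_le _ _)
      (by exact_mod_cast i.isLt)
  have hcoeff : ∀ c (i : Fin t), (q c).coeff i = c i := by
    intro c i
    rw [hq]
    simp only [Polynomial.finset_sum_coeff, Polynomial.coeff_C_mul, Polynomial.coeff_X_pow]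
    rw [Finset.sum_eq_single i]
    · simp
    · intro j _ hj
      simp only [Fin.val_eq_val]
      rw [if_neg (Ne.symm hj), mul_zero]
    · simp
  have hmem : ∀ c, Polynomial.aeval M (q c) ∈ Algebra.adjoin K {M} := by
    intro c
    rw [Algebra.adjoin_singleton_eq_range_aeval]
    exact ⟨q c, rfl⟩
  -- the linear endomorphism
  let L : (Fin t → K) →ₗ[K] (Fin t → K) :=
    { toFun := fun c => (Polynomial.aeval M (q c)).mulVec x
      map_add' := by
        intro c d
        show (Polynomial.aeval M (q (c + d))).mulVec x =
          (Polynomial.aeval M (q c)).mulVec x + (Polynomial.aeval M (q d)).mulVec x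
        have : q (c + d) = q c + q d := by
          simp [hq, Polynomial.C_add, add_mul, Finset.sum_add_distrib]
        rw [this, map_add, Matrix.add_mulVec]
      map_smul' := by
        intro k c
        show (Polynomial.aeval M (q (k • c))).mulVec x = k • (Polynomial.aeval M (q c)).mulVec x
        have : q (k • c) = Polynomial.C k * q c := by
          simp [hq, Polynomial.C_mul, Finset.mul_sum, mul_assoc]
        rw [this, map_mul, Polynomial.aeval_C, Algebra.algebraMap_eq_smul_one,
          smul_mul_assoc, one_mul, Matrix.smul_mulVec] }
  have hker : ∀ c, L c = 0 → c = 0 := by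
    intro c hc
    have hD : Polynomial.aeval M (q c) = 0 := hzero _ (hmem c) hc
    have hdvd : p ∣ q c := minpoly.dvd K M hD
    have hq0 : q c = 0 := by
      refine Polynomial.eq_zero_of_dvd_of_degree_lt hdvd ?_
      rw [Polynomial.degree_eq_natDegree hp0, hdeg]
      exact hqdeg c
    funext i
    rw [Pi.zero_apply, ← hcoeff c i, hq0, Polynomial.coeff_zero]
  have hinj : Function.Injective L := by
    rw [← LinearMap.ker_eq_bot, LinearMap.ker_eq_bot']
    exact hker
  obtain ⟨c, hc⟩ := LinearMap.injective_iff_surjective.mp hinj y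
  refine ⟨Polynomial.aeval M (q c), ⟨hmem c, hc⟩, ?_⟩
  rintro N' ⟨hN'mem, hN'x⟩
  have hDmem : N' - Polynomial.aeval M (q c) ∈ Algebra.adjoin K {M} :=
    sub_mem hN'mem (hmem c)
  have hDx : (N' - Polynomial.aeval M (q c)).mulVec x = 0 := by
    rw [Matrix.sub_mulVec, hN'x]
    show y - L c = 0
    rw [hc, sub_self]
  have := hzero _ hDmem hDx
  exact sub_eq_zero.mp this
end
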